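/- arXiv:2204.04703 — 8 statements merged into one kernel-verified Lean document; each statement's English description precedes it below -/
import Mathlib

section
/- For all real numbers r, s with 1 < r < ∞ and 1 < s < ∞, the generalized constant π_{r,s} := 2∫₀¹ (1 - t^s)^{-1/r} dt satisfies s·π_{r,s} = r'·π_{s',r'}, where r' = r/(r-1) and s' = s/(s-1) are the conjugate exponents. -/
/-!
The substitution `u = t ^ s` turns `s ∫₀¹ (1 - t^s)^(-1/r) dt` into the Beta integral
`∫₀¹ u^(1/s - 1) (1 - u)^(-1/r) du = B(1/s, 1/r')`. The reflection `u ↦ 1 - u` swaps the two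
arguments, and `B(1/r', 1/s)` is what the same substitution, now `u = t ^ r'`, produces from
`r' ∫₀¹ (1 - t^r')^(-1/s') dt`, because `-1/s' = 1/s - 1`.
-/

open MeasureTheory Set

lemma Real.rpow_image_Ioo_zero_one {p : ℝ} (hp : 0 < p) :
    (fun t : ℝ => t ^ p) '' Ioo 0 1 = Ioo 0 1 := by
  ext x
  constructor
  · rintro ⟨t, ⟨ht0, ht1⟩, rfl⟩
    exact ⟨Real.rpow_pos_of_pos ht0 p, Real.rpow_lt_one ht0.le ht1 hp⟩
  · rintro ⟨hx0, hx1⟩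
    refine ⟨x ^ p⁻¹, ⟨Real.rpow_pos_of_pos hx0 _, Real.rpow_lt_one hx0.le hx1 (inv_pos.2 hp)⟩, ?_⟩
    exact Real.rpow_inv_rpow hx0.le hp.ne'

lemma integral_comp_rpow_zero_one {E : Type*} [NormedAddCommGroup E] [NormedSpace ℝ E]
    (g : ℝ → E) {p : ℝ} (hp : 0 < p) :
    p • ∫ t in (0:ℝ)..1, g (t ^ p) = ∫ u in (0:ℝ)..1, u ^ (p⁻¹ - 1) • g u := by
  simp only [intervalIntegral.integral_of_le zero_le_one, integral_Ioc_eq_integral_Ioo]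
  have hderiv : ∀ x ∈ Ioo (0:ℝ) 1,
      HasDerivWithinAt (fun t : ℝ => t ^ p) (p * x ^ (p - 1)) (Ioo 0 1) x := fun x hx =>
    (Real.hasDerivAt_rpow_const (Or.inl hx.1.ne')).hasDerivWithinAt
  have hinj : InjOn (fun t : ℝ => t ^ p) (Ioo 0 1) := fun a ha b hb =>
    (Real.strictMonoOn_rpow_Ici_of_exponent_pos hp).injOn ha.1.le hb.1.le
  have hcov := integral_image_eq_integral_abs_deriv_smul measurableSet_Ioo hderiv hinj
    fun u => u ^ (p⁻¹ - 1) • g u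
  rw [Real.rpow_image_Ioo_zero_one hp] at hcov
  rw [hcov, ← integral_smul]
  refine setIntegral_congr_fun measurableSet_Ioo fun x hx => ?_
  have hx0 : 0 < x := hx.1
  have hjac : |p * x ^ (p - 1)| * (x ^ p) ^ (p⁻¹ - 1) = p := by
    rw [abs_of_pos (by positivity), ← Real.rpow_mul hx0.le, mul_assoc, ← Real.rpow_add hx0]
    field_simp
    simp
  simp only [smul_smul, hjac]

lemma integral_rpow_mul_one_sub_rpow_comm (a b : ℝ) :
    ∫ u in (0:ℝ)..1, u ^ a * (1 - u) ^ b = ∫ u in (0:ℝ)..1, u ^ b * (1 - u) ^ a := by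
  simpa [mul_comm] using
    intervalIntegral.integral_comp_sub_left (a := 0) (b := 1) (fun u => u ^ b * (1 - u) ^ a) 1

/-- with π_{r,s} := 2∫₀¹ (1-t^s)^{-1/r} dt, we have s·π_{r,s} = r'·π_{s',r'}. -/
theorem stmt0 (r s : ℝ) (hr : 1 < r) (hs : 1 < s) :
    s * (2 * ∫ t in (0:ℝ)..1, (1 - t ^ s) ^ (-(1 / r))) =
      (r / (r - 1)) *
        (2 * ∫ t in (0:ℝ)..1, (1 - t ^ (r / (r - 1))) ^ (-(1 / (s / (s - 1))))) := by
  have hr' : 0 < r / (r - 1) := div_pos (by linarith) (by linarith)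
  have beta_form (p b : ℝ) (hp : 0 < p) :
      p * ∫ t in (0:ℝ)..1, (1 - t ^ p) ^ b = ∫ u in (0:ℝ)..1, u ^ (p⁻¹ - 1) * (1 - u) ^ b :=
    integral_comp_rpow_zero_one (fun u => (1 - u) ^ b) hp
  have e₁ : (r / (r - 1))⁻¹ - 1 = -(1 / r) := by field_simp; ring
  have e₂ : -(1 / (s / (s - 1))) = s⁻¹ - 1 := by field_simp; ring
  rw [mul_left_comm, beta_form s _ (by linarith), mul_left_comm, beta_form _ _ hr', e₁, e₂,
    integral_rpow_mul_one_sub_rpow_comm]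
end

section
/- Let 1 < p, q < ∞, λ > 0. Consider the first-order system u₁' = u₂, u₂' = -⌊w₁⌉^{p'-1}, w₁' = w₂, w₂' = -λ⌊u₁⌉^{q-1} on [0,∞) with u₁(0) = w₁(0) = 0, u₂(0) = α, w₂(0) = β. If α > 0 and β < 0, then u₁ is strictly increasing and w₁ is strictly decreasing on (0, t_∞), where t_∞ is the maximal existence time. -/
/-- Signed power ⌊x⌉^r = |x|^r · sgn x. -/
noncomputable def spow (r x : ℝ) : ℝ := |x| ^ r * Real.sign x

lemma spow_nonpos (r x : ℝ) (hx : x ≤ 0) : spow r x ≤ 0 := by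
  unfold spow
  rcases hx.lt_or_eq with h | h
  · rw [Real.sign_of_neg h]
    have := Real.rpow_nonneg (abs_nonneg x) r
    nlinarith
  · subst h; simp

lemma spow_nonneg (r x : ℝ) (hx : 0 ≤ x) : 0 ≤ spow r x := by
  unfold spow
  rcases hx.lt_or_eq with h | h
  · rw [Real.sign_of_pos h]
    have := Real.rpow_nonneg (abs_nonneg x) r
    nlinarith
  · subst h; simp

/-- for the first-order system u₁'=u₂, u₂'=-⌊w₁⌉^{p'-1}, w₁'=w₂,
w₂'=-λ⌊u₁⌉^{q-1} with u₁(0)=w₁(0)=0, u₂(0)=α>0, w₂(0)=β<0, the component u₁ is strictly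
increasing and w₁ strictly decreasing on the maximal interval of existence [0, t_∞). -/
theorem stmt7 (p q lam : ℝ) (hp : 1 < p) (hq : 1 < q) (hlam : 0 < lam)
    (α β : ℝ) (hα : 0 < α) (hβ : β < 0)
    (u1 u2 w1 w2 : ℝ → ℝ) (tinf : EReal) (htinf : 0 < tinf)
    (hde : ∀ t : ℝ, 0 ≤ t → (t : EReal) < tinf →
      HasDerivAt u1 (u2 t) t ∧
      HasDerivAt u2 (-spow (p / (p - 1) - 1) (w1 t)) t ∧
      HasDerivAt w1 (w2 t) t ∧
      HasDerivAt w2 (-(lam * spow (q - 1) (u1 t))) t)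
    (h0 : u1 0 = 0) (h0' : w1 0 = 0) (hα0 : u2 0 = α) (hβ0 : w2 0 = β) :
    StrictMonoOn u1 {t : ℝ | 0 ≤ t ∧ (t : EReal) < tinf} ∧
    StrictAntiOn w1 {t : ℝ | 0 ≤ t ∧ (t : EReal) < tinf} := by
  -- Key invariance: on every [0,T] with T < tinf, α ≤ u2 and w2 ≤ β.
  have key : ∀ T : ℝ, 0 ≤ T → (T : EReal) < tinf →
      ∀ t ∈ Set.Icc (0:ℝ) T, α ≤ u2 t ∧ w2 t ≤ β := by
    intro T hT0 hTlt
    have hmem : ∀ t ∈ Set.Icc (0:ℝ) T, 0 ≤ t ∧ (t : EReal) < tinf := by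
      intro t ht
      exact ⟨ht.1, lt_of_le_of_lt (EReal.coe_le_coe_iff.mpr ht.2) hTlt⟩
    set A : Set ℝ :=
      {t | t ∈ Set.Icc (0:ℝ) T ∧ ∀ s ∈ Set.Icc (0:ℝ) t, 0 < u2 s ∧ w2 s < 0} with hA
    have h0A : (0:ℝ) ∈ A := by
      refine ⟨⟨le_refl _, hT0⟩, ?_⟩
      intro s hs
      have : s = 0 := le_antisymm hs.2 hs.1
      simp [this, hα0, hβ0, hα, hβ]
    have hbdd : BddAbove A := ⟨T, fun x hx => hx.1.2⟩
    set t0 := sSup A with ht0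
    have ht0mem : t0 ∈ Set.Icc (0:ℝ) T :=
      ⟨le_csSup hbdd h0A, csSup_le ⟨0, h0A⟩ fun x hx => hx.1.2⟩
    have hlt : ∀ s, 0 ≤ s → s < t0 → 0 < u2 s ∧ w2 s < 0 := by
      intro s hs0 hst
      obtain ⟨a, haA, hsa⟩ := exists_lt_of_lt_csSup ⟨0, h0A⟩ hst
      exact haA.2 s ⟨hs0, hsa.le⟩
    -- the closed conditions hold on all of [0, t0]
    have honIcc : ∀ t ∈ Set.Icc (0:ℝ) t0, α ≤ u2 t ∧ w2 t ≤ β := by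
      intro t ht
      have hsub : Set.Icc (0:ℝ) t ⊆ Set.Icc 0 T :=
        Set.Icc_subset_Icc le_rfl (ht.2.trans ht0mem.2)
      have hD : ∀ x ∈ Set.Icc (0:ℝ) t, 0 ≤ x ∧ (x : EReal) < tinf :=
        fun x hx => hmem x (hsub hx)
      have hintsub : interior (Set.Icc (0:ℝ) t) ⊆ Set.Icc 0 t := interior_subset
      -- u1 monotone on [0,t]
      have hu1cont : ContinuousOn u1 (Set.Icc (0:ℝ) t) := fun x hx =>
        ((hde x (hD x hx).1 (hD x hx).2).1.continuousAt).continuousWithinAt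
      have hu1mono : MonotoneOn u1 (Set.Icc (0:ℝ) t) := by
        refine monotoneOn_of_hasDerivWithinAt_nonneg (convex_Icc _ _) hu1cont
          (f' := u2) (fun x hx =>
            ((hde x (hD x (hintsub hx)).1 (hD x (hintsub hx)).2).1).hasDerivWithinAt)
          (fun x hx => ?_)
        rw [interior_Icc] at hx
        exact (hlt x hx.1.le (lt_of_lt_of_le hx.2 ht.2)).1.le
      have hu1nonneg : ∀ s ∈ Set.Icc (0:ℝ) t, 0 ≤ u1 s := by
        intro s hs
        have := hu1mono ⟨le_refl _, ht.1⟩ hs hs.1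
        rwa [h0] at this
      -- w1 antitone on [0,t]
      have hw1cont : ContinuousOn w1 (Set.Icc (0:ℝ) t) := fun x hx =>
        ((hde x (hD x hx).1 (hD x hx).2).2.2.1.continuousAt).continuousWithinAt
      have hw1anti : AntitoneOn w1 (Set.Icc (0:ℝ) t) := by
        refine antitoneOn_of_hasDerivWithinAt_nonpos (convex_Icc _ _) hw1cont
          (f' := w2) (fun x hx =>
            ((hde x (hD x (hintsub hx)).1 (hD x (hintsub hx)).2).2.2.1).hasDerivWithinAt)
          (fun x hx => ?_)
        rw [interior_Icc] at hx
        exact (hlt x hx.1.le (lt_of_lt_of_le hx.2 ht.2)).2.le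
      have hw1nonpos : ∀ s ∈ Set.Icc (0:ℝ) t, w1 s ≤ 0 := by
        intro s hs
        have := hw1anti ⟨le_refl _, ht.1⟩ hs hs.1
        rwa [h0'] at this
      -- u2 monotone on [0,t]
      have hu2cont : ContinuousOn u2 (Set.Icc (0:ℝ) t) := fun x hx =>
        ((hde x (hD x hx).1 (hD x hx).2).2.1.continuousAt).continuousWithinAt
      have hu2mono : MonotoneOn u2 (Set.Icc (0:ℝ) t) := by
        refine monotoneOn_of_hasDerivWithinAt_nonneg (convex_Icc _ _) hu2cont
          (f' := fun x => -spow (p / (p - 1) - 1) (w1 x)) (fun x hx =>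
            ((hde x (hD x (hintsub hx)).1 (hD x (hintsub hx)).2).2.1).hasDerivWithinAt)
          (fun x hx => ?_)
        have := spow_nonpos (p / (p - 1) - 1) (w1 x) (hw1nonpos x (hintsub hx))
        linarith
      -- w2 antitone on [0,t]
      have hw2cont : ContinuousOn w2 (Set.Icc (0:ℝ) t) := fun x hx =>
        ((hde x (hD x hx).1 (hD x hx).2).2.2.2.continuousAt).continuousWithinAt
      have hw2anti : AntitoneOn w2 (Set.Icc (0:ℝ) t) := by
        refine antitoneOn_of_hasDerivWithinAt_nonpos (convex_Icc _ _) hw2cont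
          (f' := fun x => -(lam * spow (q - 1) (u1 x))) (fun x hx =>
            ((hde x (hD x (hintsub hx)).1 (hD x (hintsub hx)).2).2.2.2).hasDerivWithinAt)
          (fun x hx => ?_)
        have := spow_nonneg (q - 1) (u1 x) (hu1nonneg x (hintsub hx))
        show -(lam * spow (q - 1) (u1 x)) ≤ 0
        nlinarith
      constructor
      · have := hu2mono ⟨le_refl _, ht.1⟩ ⟨ht.1, le_refl _⟩ ht.1
        rwa [hα0] at this
      · have := hw2anti ⟨le_refl _, ht.1⟩ ⟨ht.1, le_refl _⟩ ht.1
        rwa [hβ0] at this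
    -- t0 = T
    have ht0T : t0 = T := by
      by_contra hne
      have ht0ltT : t0 < T := lt_of_le_of_ne ht0mem.2 hne
      have hDt0 := hde t0 ht0mem.1 (hmem t0 ht0mem).2
      have hu2t0 : 0 < u2 t0 :=
        lt_of_lt_of_le hα (honIcc t0 ⟨ht0mem.1, le_refl _⟩).1
      have hw2t0 : w2 t0 < 0 :=
        lt_of_le_of_lt (honIcc t0 ⟨ht0mem.1, le_refl _⟩).2 hβ
      have h1 : ∀ᶠ s in nhds t0, 0 < u2 s :=
        hDt0.2.1.continuousAt.tendsto.eventually (eventually_gt_nhds hu2t0)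
      have h2 : ∀ᶠ s in nhds t0, w2 s < 0 :=
        hDt0.2.2.2.continuousAt.tendsto.eventually (eventually_lt_nhds hw2t0)
      obtain ⟨δ, hδ0, hδ⟩ := Metric.eventually_nhds_iff.mp (h1.and h2)
      set t1 := min (t0 + δ / 2) T with ht1
      have ht0t1 : t0 < t1 := lt_min (by linarith) ht0ltT
      have ht1A : t1 ∈ A := by
        refine ⟨⟨le_trans ht0mem.1 ht0t1.le, min_le_right _ _⟩, ?_⟩
        intro s hs
        rcases le_or_gt s t0 with h | h
        · have := honIcc s ⟨hs.1, h⟩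
          exact ⟨lt_of_lt_of_le hα this.1, lt_of_le_of_lt this.2 hβ⟩
        · have hst1 : s ≤ t0 + δ / 2 := le_trans hs.2 (min_le_left _ _)
          have : dist s t0 < δ := by
            rw [Real.dist_eq, abs_of_pos (by linarith : (0:ℝ) < s - t0)]
            linarith
          exact hδ this
      exact absurd (le_csSup hbdd ht1A) (not_le.mpr ht0t1)
    intro t ht
    exact honIcc t (ht0T ▸ ht)
  constructor
  · intro s hs t ht hst
    have hkey := key t ht.1 ht.2
    have hmem : ∀ x ∈ Set.Icc (0:ℝ) t, 0 ≤ x ∧ (x : EReal) < tinf := by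
      intro x hx
      exact ⟨hx.1, lt_of_le_of_lt (EReal.coe_le_coe_iff.mpr hx.2) ht.2⟩
    have hcont : ContinuousOn u1 (Set.Icc (0:ℝ) t) := fun x hx =>
      ((hde x (hmem x hx).1 (hmem x hx).2).1.continuousAt).continuousWithinAt
    have hmono : StrictMonoOn u1 (Set.Icc (0:ℝ) t) := by
      refine strictMonoOn_of_hasDerivWithinAt_pos (convex_Icc _ _) hcont
        (f' := u2) (fun x hx =>
          ((hde x (hmem x (interior_subset hx)).1
            (hmem x (interior_subset hx)).2).1).hasDerivWithinAt)
        (fun x hx => lt_of_lt_of_le hα (hkey x (interior_subset hx)).1)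
    exact hmono ⟨hs.1, hst.le⟩ ⟨le_trans hs.1 hst.le, le_refl _⟩ hst
  · intro s hs t ht hst
    have hkey := key t ht.1 ht.2
    have hmem : ∀ x ∈ Set.Icc (0:ℝ) t, 0 ≤ x ∧ (x : EReal) < tinf := by
      intro x hx
      exact ⟨hx.1, lt_of_le_of_lt (EReal.coe_le_coe_iff.mpr hx.2) ht.2⟩
    have hcont : ContinuousOn w1 (Set.Icc (0:ℝ) t) := fun x hx =>
      ((hde x (hmem x hx).1 (hmem x hx).2).2.2.1.continuousAt).continuousWithinAt
    have hanti : StrictAntiOn w1 (Set.Icc (0:ℝ) t) := by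
      refine strictAntiOn_of_hasDerivWithinAt_neg (convex_Icc _ _) hcont
        (f' := w2) (fun x hx =>
          ((hde x (hmem x (interior_subset hx)).1
            (hmem x (interior_subset hx)).2).2.2.1).hasDerivWithinAt)
        (fun x hx => lt_of_le_of_lt (hkey x (interior_subset hx)).2 hβ)
    exact hanti ⟨hs.1, hst.le⟩ ⟨le_trans hs.1 hst.le, le_refl _⟩ hst
end

section
/- Symmetry of positive eigenfunctions: let 1 < p, q < ∞ and suppose u is a solution of (⌊u''⌉^{p-1})'' = λ⌊u⌉^{q-1} on [0, t₀] with Navier boundary conditions, u > 0 on (0, t₀), and suppose such positive solutions for given λ are unique (unique up to positive scalar multiple when p = q). Then u(t) = u(t₀ - t) for all t ∈ [0, t₀]. -/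
/-- u solves (⌊u''⌉^{p-1})'' = λ⌊u⌉^{q-1} on [0,t₀] with Navier boundary conditions. -/
def NavierSol (p q lam t₀ : ℝ) (u : ℝ → ℝ) : Prop :=
  ContDiff ℝ 2 u ∧ ContDiff ℝ 2 (fun t => spow (p - 1) (deriv (deriv u) t)) ∧
  (∀ t ∈ Set.Icc (0:ℝ) t₀,
    deriv (deriv fun s => spow (p - 1) (deriv (deriv u) s)) t = lam * spow (q - 1) (u t)) ∧
  u 0 = 0 ∧ u t₀ = 0 ∧ deriv (deriv u) 0 = 0 ∧ deriv (deriv u) t₀ = 0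

lemma deriv_deriv_comp_const_sub {𝕜 F : Type*} [NontriviallyNormedField 𝕜] [NormedAddCommGroup F]
    [NormedSpace 𝕜 F] (f : 𝕜 → F) (a : 𝕜) :
    deriv (deriv fun t => f (a - t)) = fun t => deriv (deriv f) (a - t) := by
  have h : deriv (fun t => f (a - t)) = fun t => -deriv f (a - t) :=
    funext (deriv_comp_const_sub f a)
  funext t
  rw [h, deriv.fun_neg, deriv_comp_const_sub (deriv f), neg_neg]

lemma sub_mem_Icc_of_mem_Icc {a b : ℝ} {t : ℝ} (ht : t ∈ Set.Icc a b) :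
    b + a - t ∈ Set.Icc a b :=
  ⟨by linarith [ht.2], by linarith [ht.1]⟩

lemma sub_mem_Ioo_of_mem_Ioo {a b : ℝ} {t : ℝ} (ht : t ∈ Set.Ioo a b) :
    b + a - t ∈ Set.Ioo a b :=
  ⟨by linarith [ht.2], by linarith [ht.1]⟩

lemma NavierSol.comp_const_sub {p q lam t₀ : ℝ} {u : ℝ → ℝ} (hu : NavierSol p q lam t₀ u) :
    NavierSol p q lam t₀ (fun t => u (t₀ - t)) := by
  obtain ⟨hu₂, hw₂, heq, h0, ht₀, hdd0, hddt₀⟩ := hu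
  have reflect : ∀ {n : ℕ} {f : ℝ → ℝ}, ContDiff ℝ n f → ContDiff ℝ n fun t => f (t₀ - t) :=
    fun hf => hf.comp (contDiff_const.sub contDiff_id)
  simp only [NavierSol, deriv_deriv_comp_const_sub, sub_zero, sub_self]
  refine ⟨reflect hu₂, reflect hw₂, fun t ht => ?_, ht₀, h0, hddt₀, hdd0⟩
  rw [deriv_deriv_comp_const_sub (fun s => spow (p - 1) (deriv (deriv u) s))]
  simpa using heq (t₀ - t) (by simpa using sub_mem_Icc_of_mem_Icc ht)

theorem stmt9_general (p q lam t₀ : ℝ) (ht₀ : 0 < t₀)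
    (u : ℝ → ℝ) (hu : NavierSol p q lam t₀ u)
    (hpos : ∀ t ∈ Set.Ioo (0:ℝ) t₀, 0 < u t)
    (huniq : ∀ v : ℝ → ℝ, NavierSol p q lam t₀ v →
      (∀ t ∈ Set.Ioo (0:ℝ) t₀, 0 < v t) →
      ∃ c : ℝ, 0 < c ∧ ∀ t ∈ Set.Icc (0:ℝ) t₀, v t = c * u t) :
    ∀ t ∈ Set.Icc (0:ℝ) t₀, u t = u (t₀ - t) := by
  obtain ⟨c, -, hc⟩ := huniq _ hu.comp_const_sub fun t ht =>
    hpos (t₀ - t) (by simpa using sub_mem_Ioo_of_mem_Ioo ht)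
  -- The reflection fixes the midpoint, where `u > 0`; this forces `c = 1`.
  have hmid : t₀ / 2 ∈ Set.Ioo (0:ℝ) t₀ := ⟨by linarith, by linarith⟩
  have hc_one : c = 1 := by
    have h := hc (t₀ / 2) (Set.Ioo_subset_Icc_self hmid)
    rw [show t₀ - t₀ / 2 = t₀ / 2 by ring] at h
    exact (mul_eq_right₀ (hpos _ hmid).ne').mp h.symm
  intro t ht
  simpa [hc_one] using (hc t ht).symm

/-- a positive Navier solution, unique up to positive scalar multiples,
is symmetric about t₀/2. -/
theorem stmt9 (p q lam t₀ : ℝ) (hp : 1 < p) (hq : 1 < q) (ht₀ : 0 < t₀) (hlam : 0 < lam)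
    (u : ℝ → ℝ) (hu : NavierSol p q lam t₀ u)
    (hpos : ∀ t ∈ Set.Ioo (0:ℝ) t₀, 0 < u t)
    (huniq : ∀ v : ℝ → ℝ, NavierSol p q lam t₀ v →
      (∀ t ∈ Set.Ioo (0:ℝ) t₀, 0 < v t) →
      ∃ c : ℝ, 0 < c ∧ ∀ t ∈ Set.Icc (0:ℝ) t₀, v t = c * u t) :
    ∀ t ∈ Set.Icc (0:ℝ) t₀, u t = u (t₀ - t) :=
  stmt9_general p q lam t₀ ht₀ u hu hpos huniq
end

section
/- Interlacing of zeros: let u be a solution of (⌊u''⌉^{p-1})'' = λ⌊u⌉^{q-1} on [0, t₀] with Navier boundary conditions and u'(0) ≠ 0. Then u vanishes exactly n times in the open interval (0, t₀) if and only if u'' vanishes exactly n times in (0, t₀). -/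
open Set

theorem Set.encard_le_encard_add_one_of_interleaved {α : Type*} [LinearOrder α] {s t : Set α}
    (h : ∀ x ∈ s, ∀ y ∈ s, x < y → ∃ z ∈ t, x < z ∧ z < y) :
    s.encard ≤ t.encard + 1 := by
  refine ENat.forall_natCast_le_iff_le.mp fun m hm => ?_
  obtain ⟨s', hs's, hs'm⟩ := exists_subset_encard_eq hm
  have hs' : s'.Finite := finite_of_encard_eq_coe hs'm
  have hpick : ∀ x y : α, ∃ z, x ∈ s' → y ∈ s' → x < y → z ∈ t ∧ x < z ∧ z < y := by
    intro x y
    by_cases hxy : x ∈ s' ∧ y ∈ s' ∧ x < y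
    · obtain ⟨z, hz⟩ := h x (hs's hxy.1) y (hs's hxy.2.1) hxy.2.2
      exact ⟨z, fun _ _ _ => hz⟩
    · exact ⟨x, fun hx hy hlt => absurd ⟨hx, hy, hlt⟩ hxy⟩
  choose pick hpick using hpick
  set S := hs'.toFinset
  set T := ((S ×ˢ S).filter fun xy => xy.1 < xy.2).image fun xy => pick xy.1 xy.2
  have hT : (T : Set α) ⊆ t := by
    intro z hz
    obtain ⟨⟨x, y⟩, hxy, rfl⟩ := Finset.mem_image.mp hz
    simp only [Finset.mem_filter, Finset.mem_product, S, Finite.mem_toFinset] at hxy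
    exact (hpick x y hxy.1.1 hxy.1.2 hxy.2).1
  have hST : S.card ≤ T.card + 1 := by
    refine Finset.card_le_of_interleaved fun x hx y hy hxy _ => ⟨pick x y, ?_, ?_⟩
    · exact Finset.mem_image.mpr ⟨(x, y), by simp [hx, hy, hxy], rfl⟩
    · rw [Finite.mem_toFinset] at hx hy
      exact (hpick x y hx hy hxy).2
  calc (m : ℕ∞) = S.card := by rw [← hs'm, hs'.encard_eq_coe_toFinset_card]
    _ ≤ T.card + 1 := by exact_mod_cast hST
    _ = (T : Set α).encard + 1 := by rw [encard_coe_eq_coe_finsetCard]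
    _ ≤ t.encard + 1 := by gcongr

theorem encard_zeros_Icc_le_encard_zeros_deriv_Ioo_add_one {f : ℝ → ℝ} {a b : ℝ}
    (hf : ContinuousOn f (Icc a b)) :
    {x ∈ Icc a b | f x = 0}.encard ≤ {x ∈ Ioo a b | deriv f x = 0}.encard + 1 := by
  refine encard_le_encard_add_one_of_interleaved fun x hx y hy hxy => ?_
  obtain ⟨z, hz, hz0⟩ := exists_deriv_eq_zero hxy
    (hf.mono (Icc_subset_Icc hx.1.1 hy.1.2)) (hx.2.trans hy.2.symm)
  exact ⟨z, ⟨⟨hx.1.1.trans_lt hz.1, hz.2.trans_le hy.1.2⟩, hz0⟩, hz⟩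

theorem encard_zeros_Icc_eq_encard_zeros_Ioo_add_two {f : ℝ → ℝ} {a b : ℝ} (hab : a < b)
    (ha : f a = 0) (hb : f b = 0) :
    {x ∈ Icc a b | f x = 0}.encard = {x ∈ Ioo a b | f x = 0}.encard + 2 := by
  have hIcc : {x ∈ Icc a b | f x = 0} = insert a (insert b {x ∈ Ioo a b | f x = 0}) := by
    rw [← Ico_insert_right hab.le, ← Ioo_insert_left hab]
    ext x
    simp only [mem_insert_iff, mem_ofPred_eq]
    aesop
  rw [hIcc, encard_insert_of_notMem, encard_insert_of_notMem, add_assoc, one_add_one_eq_two]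
  · exact fun hb => hb.1.2.false
  · simp only [mem_insert_iff, mem_ofPred_eq, mem_Ioo, lt_self_iff_false, false_and, or_false]
    exact hab.ne

theorem encard_zeros_Ioo_le_encard_zeros_deriv_deriv {f : ℝ → ℝ} {a b : ℝ}
    (hf : ContinuousOn f (Icc a b)) (hf' : ContinuousOn (deriv f) (Icc a b))
    (ha : f a = 0) (hb : f b = 0) :
    {x ∈ Ioo a b | f x = 0}.encard ≤ {x ∈ Ioo a b | deriv (deriv f) x = 0}.encard := by
  rcases le_or_gt b a with hba | hab
  · simp [Ioo_eq_empty_of_le hba]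
  have hmono : {x ∈ Ioo a b | deriv f x = 0} ⊆ {x ∈ Icc a b | deriv f x = 0} :=
    fun x hx => ⟨Ioo_subset_Icc_self hx.1, hx.2⟩
  refine (ENat.add_le_add_iff_right (by simp : (2 : ℕ∞) ≠ ⊤)).mp ?_
  calc {x ∈ Ioo a b | f x = 0}.encard + 2 = {x ∈ Icc a b | f x = 0}.encard :=
        (encard_zeros_Icc_eq_encard_zeros_Ioo_add_two hab ha hb).symm
    _ ≤ {x ∈ Ioo a b | deriv f x = 0}.encard + 1 :=
        encard_zeros_Icc_le_encard_zeros_deriv_Ioo_add_one hf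
    _ ≤ {x ∈ Icc a b | deriv f x = 0}.encard + 1 := by gcongr
    _ ≤ {x ∈ Ioo a b | deriv (deriv f) x = 0}.encard + 1 + 1 := by
        gcongr; exact encard_zeros_Icc_le_encard_zeros_deriv_Ioo_add_one hf'
    _ = {x ∈ Ioo a b | deriv (deriv f) x = 0}.encard + 2 := by
        rw [add_assoc, one_add_one_eq_two]

theorem spow_eq_zero_iff {r x : ℝ} : spow r x = 0 ↔ x = 0 := by
  rcases eq_or_ne x 0 with rfl | hx
  · simp [spow]
  · simp only [spow, mul_eq_zero, Real.sign_eq_zero_iff, hx, or_false, iff_false]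
    exact (Real.rpow_pos_of_pos (abs_pos.mpr hx) r).ne'

theorem stmt10_general (p q lam t₀ : ℝ) (hlam : 0 < lam)
    (u : ℝ → ℝ) (hu : NavierSol p q lam t₀ u) (n : ℕ) :
    {t | t ∈ Set.Ioo (0:ℝ) t₀ ∧ u t = 0}.encard = n ↔
      {t | t ∈ Set.Ioo (0:ℝ) t₀ ∧ deriv (deriv u) t = 0}.encard = n := by
  obtain ⟨hu2, hw2, hode, hu0, hut, hw0, hwt⟩ := hu
  set w : ℝ → ℝ := fun t => spow (p - 1) (deriv (deriv u) t)
  have hzeros_w : {t | t ∈ Ioo 0 t₀ ∧ w t = 0} = {t | t ∈ Ioo 0 t₀ ∧ deriv (deriv u) t = 0} := by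
    ext t
    exact and_congr_right fun _ => spow_eq_zero_iff
  have hzeros_w'' : {t | t ∈ Ioo 0 t₀ ∧ deriv (deriv w) t = 0} = {t | t ∈ Ioo 0 t₀ ∧ u t = 0} := by
    ext t
    refine and_congr_right fun ht => ?_
    rw [hode t (Ioo_subset_Icc_self ht), mul_eq_zero, spow_eq_zero_iff, or_iff_right hlam.ne']
  have hle := encard_zeros_Ioo_le_encard_zeros_deriv_deriv hu2.continuous.continuousOn
    (hu2.continuous_deriv one_le_two).continuousOn hu0 hut
  have hge := encard_zeros_Ioo_le_encard_zeros_deriv_deriv hw2.continuous.continuousOn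
    (hw2.continuous_deriv one_le_two).continuousOn (spow_eq_zero_iff.mpr hw0)
    (spow_eq_zero_iff.mpr hwt)
  rw [hzeros_w, hzeros_w''] at hge
  rw [le_antisymm hle hge]

/-- interlacing of zeros.  For a Navier solution with u'(0) ≠ 0,
u vanishes exactly n times in (0,t₀) iff u'' vanishes exactly n times in (0,t₀). -/
theorem stmt10 (p q lam t₀ : ℝ) (hp : 1 < p) (hq : 1 < q) (ht₀ : 0 < t₀) (hlam : 0 < lam)
    (u : ℝ → ℝ) (hu : NavierSol p q lam t₀ u) (hd : deriv u 0 ≠ 0) (n : ℕ) :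
    {t | t ∈ Set.Ioo (0:ℝ) t₀ ∧ u t = 0}.encard = n ↔
      {t | t ∈ Set.Ioo (0:ℝ) t₀ ∧ deriv (deriv u) t = 0}.encard = n :=
  stmt10_general p q lam t₀ hlam u hu n
end

section
/- Let 1 < p < ∞ and let u(x) = sin_{2,p'}(x) be the generalized sine function with parameters (2, p'). Then u''(x) = -(p'/2)·|u(x)|^{p'-2}·u(x) for all x in (0, π_{2,p'}). -/
open Set Filter MeasureTheory
open scoped Topology

/-!
On `[0, π_{2,q}/2]` the function `sn` is the inverse of `F(y) = ∫₀^y (1 - t^q)^(-1/2) dt`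
(`genArcsin q`, with `genArcsin q 1 = π_{2,q}/2`), so the inverse function theorem gives
`sn' = (1 - sn^q)^(1/2)`, and differentiating once more gives `sn'' = -(q/2) sn^(q-1)`.
At the quarter period `F` has infinite slope, so there the derivatives of `sn` and `sn'` are
obtained as limits from the left; evenness of `sn` about `π_{2,q}/2` makes `sn'` odd and `sn''`
even about that point, which supplies the right-hand derivatives and transfers the equation to
`(π_{2,q}/2, π_{2,q})`.
-/

noncomputable section

def arcsinIntegrand (q t : ℝ) : ℝ := (1 - t ^ q) ^ (-(1 / 2 : ℝ))

def genArcsin (q y : ℝ) : ℝ := ∫ t in (0 : ℝ)..y, arcsinIntegrand q t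

end

section Integrand

variable {q t : ℝ}

lemma one_sub_rpow_pos (hq : 0 < q) (ht : t ∈ Ico (0 : ℝ) 1) : 0 < 1 - t ^ q :=
  sub_pos.2 (Real.rpow_lt_one ht.1 ht.2 hq)

lemma arcsinIntegrand_pos (hq : 0 < q) (ht : t ∈ Ico (0 : ℝ) 1) : 0 < arcsinIntegrand q t :=
  Real.rpow_pos_of_pos (one_sub_rpow_pos hq ht) _

lemma continuousOn_arcsinIntegrand (hq : 0 < q) : ContinuousOn (arcsinIntegrand q) (Ico 0 1) :=
  fun _ ht => ((continuousAt_const.sub (continuousAt_id.rpow_const (Or.inr hq.le))).rpow_const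
    (Or.inl (one_sub_rpow_pos hq ht).ne')).continuousWithinAt

/-- Near `t = 1` the integrand is dominated by `(1 - t) ^ (-1/2)`, since `t ^ q ≤ t`. -/
lemma intervalIntegrable_arcsinIntegrand (hq : 1 ≤ q) :
    IntervalIntegrable (arcsinIntegrand q) volume 0 1 := by
  have hmaj : IntervalIntegrable (fun t : ℝ => (1 - t) ^ (-(1 / 2 : ℝ))) volume 0 1 := by
    simpa using ((intervalIntegral.intervalIntegrable_rpow' (a := 0) (b := 1)
      (r := -(1 / 2 : ℝ)) (by norm_num)).comp_sub_left 1).symm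
  have hmeas : Measurable (arcsinIntegrand q) := by unfold arcsinIntegrand; fun_prop
  refine hmaj.mono_fun hmeas.aestronglyMeasurable.restrict ?_
  rw [uIoc_of_le zero_le_one]
  filter_upwards [ae_restrict_mem measurableSet_Ioc] with s ⟨hs0, hs1⟩
  unfold arcsinIntegrand
  rw [Real.norm_of_nonneg (Real.rpow_nonneg (sub_nonneg.2 (Real.rpow_le_one hs0.le hs1
    (by linarith))) _), Real.norm_of_nonneg (Real.rpow_nonneg (by linarith) _)]
  rcases hs1.eq_or_lt with rfl | hs1
  · simp
  · have hsq : s ^ q ≤ s := by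
      simpa using Real.rpow_le_rpow_of_exponent_ge hs0 hs1.le hq
    exact Real.rpow_le_rpow_of_nonpos (by linarith) (by linarith) (by norm_num)

end Integrand

section GenArcsin

variable {q y : ℝ}

lemma genArcsin_zero : genArcsin q 0 = 0 := intervalIntegral.integral_same

lemma continuousOn_genArcsin (hq : 1 ≤ q) : ContinuousOn (genArcsin q) (Icc 0 1) := by
  have h := intervalIntegral.continuousOn_primitive_interval'
    (intervalIntegrable_arcsinIntegrand hq) left_mem_uIcc
  rwa [uIcc_of_le zero_le_one] at h

lemma strictMonoOn_genArcsin (hq : 1 ≤ q) : StrictMonoOn (genArcsin q) (Icc 0 1) := by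
  intro a ha b hb hab
  have hint : ∀ c ∈ Icc (0 : ℝ) 1, IntervalIntegrable (arcsinIntegrand q) volume 0 c :=
    fun c hc => (intervalIntegrable_arcsinIntegrand hq).mono_set
      (uIcc_subset_uIcc_left (by simpa using hc))
  have hpos : 0 < ∫ t in a..b, arcsinIntegrand q t :=
    intervalIntegral.intervalIntegral_pos_of_pos_on ((hint a ha).symm.trans (hint b hb))
      (fun t ht => arcsinIntegrand_pos (by linarith) ⟨ha.1.trans ht.1.le, ht.2.trans_le hb.2⟩)
      hab
  rw [← intervalIntegral.integral_interval_sub_left (hint b hb) (hint a ha)] at hpos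
  exact sub_pos.1 hpos

lemma hasDerivAt_genArcsin (hq : 0 < q) (hy : y ∈ Ioo 0 1) :
    HasDerivAt (genArcsin q) (arcsinIntegrand q y) y := by
  have hcont := continuousOn_arcsinIntegrand hq
  have hIoo : ContinuousOn (arcsinIntegrand q) (Ioo 0 1) := hcont.mono Ioo_subset_Ico_self
  refine intervalIntegral.integral_hasDerivAt_right ?_
    (hIoo.stronglyMeasurableAtFilter isOpen_Ioo y hy) (hIoo.continuousAt (isOpen_Ioo.mem_nhds hy))
  refine (hcont.mono ?_).intervalIntegrable
  rw [uIcc_of_le hy.1.le]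
  exact Icc_subset_Ico_right hy.2

end GenArcsin

section LeftInverse

variable {G g : ℝ → ℝ} {a b x : ℝ}

lemma Set.LeftInvOn.rightInvOn_Icc (hinv : LeftInvOn g G (Icc a b))
    (hG : ContinuousOn G (Icc a b)) (hab : a ≤ b) : RightInvOn g G (Icc (G a) (G b)) := by
  intro x hx
  obtain ⟨y, hy, rfl⟩ := hG.surjOn_Icc (left_mem_Icc.2 hab) (right_mem_Icc.2 hab) hx
  rw [hinv hy]

lemma Set.LeftInvOn.image_Icc (hinv : LeftInvOn g G (Icc a b)) (hG : ContinuousOn G (Icc a b))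
    (hGmono : MonotoneOn G (Icc a b)) (hab : a ≤ b) : g '' Icc (G a) (G b) = Icc a b := by
  refine Subset.antisymm ?_ fun y hy => ⟨G y, ?_, hinv hy⟩
  · rintro _ ⟨x, hx, rfl⟩
    obtain ⟨y, hy, rfl⟩ := hG.surjOn_Icc (left_mem_Icc.2 hab) (right_mem_Icc.2 hab) hx
    rwa [hinv hy]
  · exact ⟨hGmono (left_mem_Icc.2 hab) hy hy.1, hGmono hy (right_mem_Icc.2 hab) hy.2⟩

lemma Set.LeftInvOn.strictMonoOn_Icc (hinv : LeftInvOn g G (Icc a b))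
    (hG : ContinuousOn G (Icc a b)) (hGmono : MonotoneOn G (Icc a b)) (hab : a ≤ b) :
    StrictMonoOn g (Icc (G a) (G b)) :=
  have hright := hinv.rightInvOn_Icc hG hab
  (Function.monotoneOn_of_rightInvOn_of_mapsTo hGmono hright
    (hinv.image_Icc hG hGmono hab ▸ mapsTo_image g _)).strictMonoOn_of_injOn hright.injOn

lemma Set.LeftInvOn.mem_Ioo (hinv : LeftInvOn g G (Icc a b))
    (hG : ContinuousOn G (Icc a b)) (hGmono : MonotoneOn G (Icc a b)) (hab : a ≤ b)
    (hx : x ∈ Ioo (G a) (G b)) : g x ∈ Ioo a b := by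
  have hmono := hinv.strictMonoOn_Icc hG hGmono hab
  have hxI : x ∈ Icc (G a) (G b) := Ioo_subset_Icc_self hx
  have hGab : G a ≤ G b := hx.1.le.trans hx.2.le
  refine ⟨?_, ?_⟩
  · simpa [hinv (left_mem_Icc.2 hab)] using hmono (left_mem_Icc.2 hGab) hxI hx.1
  · simpa [hinv (right_mem_Icc.2 hab)] using hmono hxI (right_mem_Icc.2 hGab) hx.2

lemma Set.LeftInvOn.continuousAt (hinv : LeftInvOn g G (Icc a b))
    (hG : ContinuousOn G (Icc a b)) (hGmono : MonotoneOn G (Icc a b)) (hab : a ≤ b)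
    (hx : x ∈ Ioo (G a) (G b)) : ContinuousAt g x := by
  refine (hinv.strictMonoOn_Icc hG hGmono hab).continuousAt_of_image_mem_nhds
    (Icc_mem_nhds hx.1 hx.2) ?_
  have hgx := hinv.mem_Ioo hG hGmono hab hx
  rw [hinv.image_Icc hG hGmono hab]
  exact Icc_mem_nhds hgx.1 hgx.2

lemma Set.LeftInvOn.continuousWithinAt_Iic (hinv : LeftInvOn g G (Icc a b))
    (hG : ContinuousOn G (Icc a b)) (hGmono : StrictMonoOn G (Icc a b)) (hab : a < b) :
    ContinuousWithinAt g (Iic (G b)) (G b) := by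
  refine (hinv.strictMonoOn_Icc hG hGmono.monotoneOn hab.le
    ).continuousWithinAt_left_of_image_mem_nhdsWithin
    (Icc_mem_nhdsLE (hGmono (left_mem_Icc.2 hab.le) (right_mem_Icc.2 hab.le) hab)) ?_
  rw [hinv.image_Icc hG hGmono.monotoneOn hab.le, hinv (right_mem_Icc.2 hab.le)]
  exact Icc_mem_nhdsLE hab

end LeftInverse

section Reflection

variable {φ φ' : ℝ → ℝ} {a c s v : ℝ}

lemma deriv_const_sub_of_reflect (h : ∀ z, φ (a - z) = s * φ z) (z : ℝ) :
    deriv φ (a - z) = -s * deriv φ z := by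
  have h' : (fun z => φ (a - z)) = fun z => s * φ z := funext h
  have := deriv_comp_const_sub (f := φ) (a := a) (x := z)
  rw [h', deriv_const_mul_field'] at this
  linarith

/-- The left derivative at `c` is the limit of `φ'`; the symmetry `φ (2c - z) = s φ z` turns it
into the right derivative `-(s * v)`. -/
lemma hasDerivAt_of_tendsto_deriv_of_reflect (hac : a < c)
    (hφ' : ∀ z ∈ Ioo a c, HasDerivAt φ (φ' z) z) (hcont : ContinuousWithinAt φ (Iio c) c)
    (hlim : Tendsto φ' (𝓝[<] c) (𝓝 v)) (hrefl : ∀ z, φ (2 * c - z) = s * φ z)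
    (hv : -(s * v) = v) : HasDerivAt φ v c := by
  have hleft : HasDerivWithinAt φ v (Iic c) c :=
    hasDerivWithinAt_Iic_of_tendsto_deriv
      (fun z hz => (hφ' z hz).differentiableAt.differentiableWithinAt)
      (hcont.mono Ioo_subset_Iio_self) (Ioo_mem_nhdsLT hac)
      (hlim.congr' (mem_of_superset (Ioo_mem_nhdsLT hac) fun z hz => (hφ' z hz).deriv.symm))
  have hmaps : MapsTo (fun z => 2 * c - z) (Ici c) (Iic c) := fun z (hz : c ≤ z) =>
    show 2 * c - z ≤ c by linarith
  have hreflect : HasDerivWithinAt (fun z => 2 * c - z) (-1) (Ici c) c := by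
    simpa using ((hasDerivAt_id c).const_sub (2 * c)).hasDerivWithinAt
  have hright : HasDerivWithinAt (fun z => s * φ (2 * c - z)) (s * (v * -1)) (Ici c) c :=
    have hleft' : HasDerivWithinAt φ v (Iic c) (2 * c - c) := by
      rwa [two_mul, add_sub_cancel_right]
    (hleft'.comp c hreflect hmaps).const_mul s
  have hφ : (fun z => s * φ (2 * c - z)) = φ := funext fun z => by
    simpa using (hrefl (2 * c - z)).symm
  rw [hφ, mul_neg_one, mul_neg, hv] at hright
  simpa using hleft.union hright

end Reflection

lemma hasDerivAt_one_sub_rpow_sqrt {u : ℝ → ℝ} {q x : ℝ}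
    (hu : HasDerivAt u ((1 - u x ^ q) ^ (1 / 2 : ℝ)) x) (hu0 : 0 < u x) (hu1 : 0 < 1 - u x ^ q) :
    HasDerivAt (fun z => (1 - u z ^ q) ^ (1 / 2 : ℝ)) (-(q / 2) * (|u x| ^ (q - 2) * u x)) x := by
  convert ((hu.rpow_const (p := q) (Or.inl hu0.ne')).const_sub 1).rpow_const
    (p := 1 / 2) (Or.inl hu1.ne') using 1
  have hsq : (1 - u x ^ q) ^ (1 / 2 : ℝ) * (1 - u x ^ q) ^ (1 / 2 - 1 : ℝ) = 1 := by
    rw [← Real.rpow_add hu1]; norm_num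
  rw [abs_of_pos hu0, ← Real.rpow_add_one hu0.ne', show q - 2 + 1 = q - 1 by ring]
  linear_combination (q * u x ^ (q - 1) / 2) * hsq

section GenSin

variable {q x : ℝ} {sn : ℝ → ℝ}

lemma genArcsin_one_pos (hq : 1 ≤ q) : 0 < genArcsin q 1 := by
  simpa [genArcsin_zero] using strictMonoOn_genArcsin hq (left_mem_Icc.2 zero_le_one)
    (right_mem_Icc.2 zero_le_one) zero_lt_one

lemma mem_Ioo_of_leftInvOn_genArcsin (hq : 1 ≤ q) (hinv : LeftInvOn sn (genArcsin q) (Icc 0 1))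
    (hx : x ∈ Ioo 0 (genArcsin q 1)) : sn x ∈ Ioo 0 1 :=
  hinv.mem_Ioo (continuousOn_genArcsin hq) (strictMonoOn_genArcsin hq).monotoneOn zero_le_one
    (by rwa [genArcsin_zero])

lemma continuousWithinAt_Iio_of_leftInvOn_genArcsin (hq : 1 ≤ q)
    (hinv : LeftInvOn sn (genArcsin q) (Icc 0 1)) :
    ContinuousWithinAt sn (Iio (genArcsin q 1)) (genArcsin q 1) :=
  (hinv.continuousWithinAt_Iic (continuousOn_genArcsin hq) (strictMonoOn_genArcsin hq)
    zero_lt_one).mono Iio_subset_Iic_self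

lemma hasDerivAt_of_leftInvOn_genArcsin (hq : 1 ≤ q) (hinv : LeftInvOn sn (genArcsin q) (Icc 0 1))
    (hx : x ∈ Ioo 0 (genArcsin q 1)) : HasDerivAt sn ((1 - sn x ^ q) ^ (1 / 2 : ℝ)) x := by
  have hsx := mem_Ioo_of_leftInvOn_genArcsin hq hinv hx
  have hsx' : sn x ∈ Ico 0 1 := Ioo_subset_Ico_self hsx
  have hx' : x ∈ Ioo (genArcsin q 0) (genArcsin q 1) := by rwa [genArcsin_zero]
  have hG := continuousOn_genArcsin hq
  have hright := hinv.rightInvOn_Icc hG zero_le_one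
  have hGsn : ∀ᶠ z in 𝓝 x, genArcsin q (sn z) = z :=
    mem_of_superset (Icc_mem_nhds hx'.1 hx'.2) fun z hz => hright hz
  have h := (hasDerivAt_genArcsin (by linarith) hsx).of_local_left_inverse
    (hinv.continuousAt hG (strictMonoOn_genArcsin hq).monotoneOn zero_le_one hx')
    (arcsinIntegrand_pos (by linarith) hsx').ne' hGsn
  rwa [arcsinIntegrand, Real.rpow_neg (one_sub_rpow_pos (by linarith) hsx').le, inv_inv] at h

lemma hasDerivAt_deriv_of_leftInvOn_genArcsin (hq : 1 ≤ q)
    (hinv : LeftInvOn sn (genArcsin q) (Icc 0 1)) (hx : x ∈ Ioo 0 (genArcsin q 1)) :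
    HasDerivAt (deriv sn) (-(q / 2) * (|sn x| ^ (q - 2) * sn x)) x := by
  have hsx := mem_Ioo_of_leftInvOn_genArcsin hq hinv hx
  refine (hasDerivAt_one_sub_rpow_sqrt (hasDerivAt_of_leftInvOn_genArcsin hq hinv hx) hsx.1
    (one_sub_rpow_pos (by linarith) (Ioo_subset_Ico_self hsx))).congr_of_eventuallyEq ?_
  filter_upwards [isOpen_Ioo.mem_nhds hx] with z hz
    using (hasDerivAt_of_leftInvOn_genArcsin hq hinv hz).deriv

lemma tendsto_deriv_nhdsLT_of_leftInvOn_genArcsin (hq : 1 ≤ q)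
    (hinv : LeftInvOn sn (genArcsin q) (Icc 0 1)) :
    Tendsto (deriv sn) (𝓝[<] genArcsin q 1) (𝓝 0) := by
  have hsn : ContinuousAt (fun y : ℝ => (1 - y ^ q) ^ (1 / 2 : ℝ)) (sn (genArcsin q 1)) :=
    (continuousAt_const.sub (continuousAt_id.rpow_const (Or.inr (by linarith)))).rpow_const
      (Or.inr (by norm_num))
  have h := hsn.tendsto.comp (continuousWithinAt_Iio_of_leftInvOn_genArcsin hq hinv)
  rw [hinv (right_mem_Icc.2 zero_le_one), Real.one_rpow, sub_self,
    Real.zero_rpow one_half_pos.ne'] at h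
  refine h.congr' ?_
  filter_upwards [Ioo_mem_nhdsLT (genArcsin_one_pos hq)] with z hz
    using (hasDerivAt_of_leftInvOn_genArcsin hq hinv hz).deriv.symm

lemma hasDerivAt_quarter_of_leftInvOn_genArcsin (hq : 1 ≤ q)
    (hinv : LeftInvOn sn (genArcsin q) (Icc 0 1))
    (hsym : ∀ z, sn (2 * genArcsin q 1 - z) = sn z) : HasDerivAt sn 0 (genArcsin q 1) :=
  hasDerivAt_of_tendsto_deriv_of_reflect (genArcsin_one_pos hq)
    (fun _ hz => (hasDerivAt_of_leftInvOn_genArcsin hq hinv hz).differentiableAt.hasDerivAt)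
    (continuousWithinAt_Iio_of_leftInvOn_genArcsin hq hinv)
    (tendsto_deriv_nhdsLT_of_leftInvOn_genArcsin hq hinv) (s := 1) (by simpa using hsym) (by simp)

lemma hasDerivAt_deriv_quarter_of_leftInvOn_genArcsin (hq : 1 ≤ q)
    (hinv : LeftInvOn sn (genArcsin q) (Icc 0 1))
    (hsym : ∀ z, sn (2 * genArcsin q 1 - z) = sn z) :
    HasDerivAt (deriv sn) (-(q / 2) * (|sn (genArcsin q 1)| ^ (q - 2) * sn (genArcsin q 1)))
      (genArcsin q 1) := by
  have hsn1 : sn (genArcsin q 1) = 1 := hinv (right_mem_Icc.2 zero_le_one)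
  have hcont : ContinuousWithinAt (deriv sn) (Iio (genArcsin q 1)) (genArcsin q 1) := by
    rw [ContinuousWithinAt, (hasDerivAt_quarter_of_leftInvOn_genArcsin hq hinv hsym).deriv]
    exact tendsto_deriv_nhdsLT_of_leftInvOn_genArcsin hq hinv
  have hR : ContinuousAt (fun y : ℝ => -(q / 2) * (|y| ^ (q - 2) * y)) (sn (genArcsin q 1)) :=
    continuousAt_const.mul ((continuous_abs.continuousAt.rpow_const
      (Or.inl (by simp [hsn1]))).mul continuousAt_id)
  exact hasDerivAt_of_tendsto_deriv_of_reflect (genArcsin_one_pos hq)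
    (fun _ hz => hasDerivAt_deriv_of_leftInvOn_genArcsin hq hinv hz) hcont
    (hR.tendsto.comp (continuousWithinAt_Iio_of_leftInvOn_genArcsin hq hinv))
    (deriv_const_sub_of_reflect (s := 1) (by simpa using hsym)) (by ring)

theorem deriv_deriv_of_leftInvOn_genArcsin (hq : 1 ≤ q)
    (hinv : LeftInvOn sn (genArcsin q) (Icc 0 1))
    (hsym : ∀ z, sn (2 * genArcsin q 1 - z) = sn z) (hx : x ∈ Ioo 0 (2 * genArcsin q 1)) :
    deriv (deriv sn) x = -(q / 2) * (|sn x| ^ (q - 2) * sn x) := by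
  have hleft : ∀ x ∈ Ioc 0 (genArcsin q 1),
      deriv (deriv sn) x = -(q / 2) * (|sn x| ^ (q - 2) * sn x) := by
    rintro x ⟨hx0, hxc⟩
    rcases hxc.lt_or_eq with hxc | rfl
    · exact (hasDerivAt_deriv_of_leftInvOn_genArcsin hq hinv ⟨hx0, hxc⟩).deriv
    · exact (hasDerivAt_deriv_quarter_of_leftInvOn_genArcsin hq hinv hsym).deriv
  rcases le_or_gt x (genArcsin q 1) with hxc | hxc
  · exact hleft x ⟨hx.1, hxc⟩
  · have h := deriv_const_sub_of_reflect
      (deriv_const_sub_of_reflect (s := 1) (by simpa using hsym)) (2 * genArcsin q 1 - x)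
    rw [sub_sub_cancel, neg_neg, one_mul,
      hleft (2 * genArcsin q 1 - x) ⟨by linarith [hx.2], by linarith⟩, hsym] at h
    exact h

end GenSin

/-- for u = sin_{2,p'} (characterized as the inverse of
y ↦ ∫₀^y (1-t^{p'})^{-1/2} dt on [0, π_{2,p'}/2], even about π_{2,p'}/2),
one has u''(x) = -(p'/2)·|u(x)|^{p'-2}·u(x) on (0, π_{2,p'}), where p' = p/(p-1). -/
theorem stmt11 (p : ℝ) (hp : 1 < p) (sn : ℝ → ℝ) (π₀ : ℝ)
    (hπ : π₀ = 2 * ∫ t in (0:ℝ)..1, (1 - t ^ (p / (p - 1))) ^ (-(1/2 : ℝ)))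
    (hinv : ∀ y ∈ Set.Icc (0:ℝ) 1,
      sn (∫ t in (0:ℝ)..y, (1 - t ^ (p / (p - 1))) ^ (-(1/2 : ℝ))) = y)
    (hsym : ∀ x, sn (π₀ - x) = sn x) :
    ∀ x ∈ Set.Ioo (0:ℝ) π₀,
      deriv (deriv sn) x =
        -(p / (p - 1) / 2) * (|sn x| ^ (p / (p - 1) - 2) * sn x) := by
  have hq : 1 ≤ p / (p - 1) := by rw [le_div_iff₀ (by linarith)]; linarith
  subst hπ
  exact fun x hx => deriv_deriv_of_leftInvOn_genArcsin hq hinv hsym hx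
end

section
/- Generalized Pythagorean identity: for 1 < p, q < ∞ and all x ∈ ℝ, |sin_{p,q}(x)|^q + |cos_{p,q}(x)|^p = 1, where cos_{p,q} = (sin_{p,q})'. -/
/-!
On `[-π₀/2, π₀/2]` the function `sn` inverts the odd extension of `F_{p,q}` to `[-1, 1]`, so
by the inverse function theorem `sn' x = (1 - |sn x|^q)^{1/p}` there, which is the identity on
the open interval. Oddness and the symmetry about `π₀/2` make `sn` (hence `sn'`)
`π₀`-antiperiodic, so the left-hand side is `π₀`-periodic; at the remaining point `π₀/2` the
symmetry forces `sn' = 0`.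
-/

open Set Filter Topology MeasureTheory intervalIntegral Function

-- `|t|` makes the integrand even and `arcsinPQ` odd; `t ^ q` alone would not, as `Real.rpow` of a
-- negative base is not `|t| ^ q`.
noncomputable def arcsinPQIntegrand (p q t : ℝ) : ℝ := (1 - |t| ^ q) ^ (-(1 / p))

noncomputable def arcsinPQ (p q y : ℝ) : ℝ := ∫ t in (0:ℝ)..y, arcsinPQIntegrand p q t

section ArcsinPQ

variable {p q : ℝ}

lemma arcsinPQIntegrand_neg (t : ℝ) : arcsinPQIntegrand p q (-t) = arcsinPQIntegrand p q t := by
  rw [arcsinPQIntegrand, abs_neg, arcsinPQIntegrand]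

lemma arcsinPQIntegrand_pos (hq : 0 < q) {t : ℝ} (ht : |t| < 1) : 0 < arcsinPQIntegrand p q t :=
  Real.rpow_pos_of_pos (sub_pos.2 (Real.rpow_lt_one (abs_nonneg t) ht hq)) _

lemma continuousAt_arcsinPQIntegrand (hq : 0 < q) {t : ℝ} (ht : |t| < 1) :
    ContinuousAt (arcsinPQIntegrand p q) t :=
  (continuousAt_const.sub ((Real.continuous_rpow_const hq.le).comp continuous_abs).continuousAt)
    |>.rpow_const (Or.inl (sub_pos.2 (Real.rpow_lt_one (abs_nonneg t) ht hq)).ne')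

lemma abs_rpow_add_abs_inv_arcsinPQIntegrand_rpow (hp : p ≠ 0) (hq : 0 ≤ q) {t : ℝ}
    (ht : |t| ≤ 1) : |t| ^ q + |(arcsinPQIntegrand p q t)⁻¹| ^ p = 1 := by
  have h : 0 ≤ 1 - |t| ^ q := sub_nonneg.2 (Real.rpow_le_one (abs_nonneg t) ht hq)
  rw [arcsinPQIntegrand, Real.rpow_neg h, inv_inv, abs_of_nonneg (Real.rpow_nonneg h _),
    ← Real.rpow_mul h, one_div_mul_cancel hp, Real.rpow_one]
  ring

lemma intervalIntegrable_arcsinPQIntegrand (hp : 1 < p) (hq : 1 ≤ q) :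
    IntervalIntegrable (arcsinPQIntegrand p q) volume (-1) 1 := by
  have hexp : -(1 / p) < 0 := neg_neg_of_pos (by positivity)
  have hdom : IntervalIntegrable (fun t : ℝ => (1 - t) ^ (-(1 / p))) volume 0 1 := by
    have hexp' : -1 < -(1 / p) := neg_lt_neg ((div_lt_one (by linarith)).2 hp)
    simpa using ((intervalIntegrable_rpow' hexp' (a := 0) (b := 1)).comp_sub_left 1).symm
  have hmeas : Measurable (arcsinPQIntegrand p q) := by unfold arcsinPQIntegrand; fun_prop
  have hright : IntervalIntegrable (arcsinPQIntegrand p q) volume 0 1 := by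
    refine hdom.mono_fun' hmeas.aestronglyMeasurable ?_
    rw [uIoc_of_le zero_le_one]
    filter_upwards [ae_restrict_mem measurableSet_Ioc] with t ht
    rcases ht.2.eq_or_lt with rfl | ht1
    · simp only [arcsinPQIntegrand, abs_one, Real.one_rpow, sub_self, Real.norm_eq_abs]
      exact (abs_of_nonneg (Real.rpow_nonneg le_rfl _)).le
    · have htq : |t| ^ q ≤ t := by
        simpa [abs_of_pos ht.1] using Real.rpow_le_rpow_of_exponent_ge ht.1 ht1.le hq
      have habs : |t| < 1 := by rwa [abs_of_pos ht.1]
      rw [Real.norm_eq_abs, abs_of_pos (arcsinPQIntegrand_pos (by linarith) habs)]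
      exact Real.rpow_le_rpow_of_nonpos (by linarith) (by linarith) hexp.le
  have hleft : IntervalIntegrable (arcsinPQIntegrand p q) volume (-1) 0 := by
    simpa [arcsinPQIntegrand_neg] using (hright.comp_sub_left 0).symm
  exact hleft.trans hright

lemma arcsinPQ_neg (y : ℝ) : arcsinPQ p q (-y) = -arcsinPQ p q y := by
  have h := integral_comp_neg (a := 0) (b := y) (arcsinPQIntegrand p q)
  simp only [arcsinPQIntegrand_neg, neg_zero] at h
  rw [arcsinPQ, arcsinPQ, integral_symm, h]

lemma arcsinPQ_eq_integral {y : ℝ} (hy : 0 ≤ y) :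
    arcsinPQ p q y = ∫ t in (0:ℝ)..y, (1 - t ^ q) ^ (-(1 / p)) :=
  integral_congr fun t ht => by
    rw [uIcc_of_le hy] at ht
    rw [arcsinPQIntegrand, abs_of_nonneg ht.1]

lemma hasDerivAt_arcsinPQ (hq : 0 < q) {t : ℝ} (ht : |t| < 1) :
    HasDerivAt (arcsinPQ p q) (arcsinPQIntegrand p q t) t := by
  have hcont : ContinuousOn (arcsinPQIntegrand p q) (uIcc 0 t) := fun s hs => by
    have hs' : |s| ≤ |t| := by simpa using abs_sub_left_of_mem_uIcc hs
    exact (continuousAt_arcsinPQIntegrand hq (hs'.trans_lt ht)).continuousWithinAt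
  have hmeas : Measurable (arcsinPQIntegrand p q) := by unfold arcsinPQIntegrand; fun_prop
  exact integral_hasDerivAt_right hcont.intervalIntegrable
    hmeas.stronglyMeasurable.stronglyMeasurableAtFilter (continuousAt_arcsinPQIntegrand hq ht)

lemma continuousOn_arcsinPQ (hp : 1 < p) (hq : 1 ≤ q) :
    ContinuousOn (arcsinPQ p q) (Icc (-1) 1) := by
  have h := continuousOn_primitive_interval' (intervalIntegrable_arcsinPQIntegrand hp hq)
    (by simp [uIcc_of_le] : (0:ℝ) ∈ uIcc (-1) 1)
  rwa [uIcc_of_le (by norm_num)] at h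

lemma strictMonoOn_arcsinPQ (hp : 1 < p) (hq : 1 ≤ q) :
    StrictMonoOn (arcsinPQ p q) (Icc (-1) 1) :=
  strictMonoOn_of_deriv_pos (convex_Icc _ _) (continuousOn_arcsinPQ hp hq) fun t ht => by
    rw [interior_Icc, mem_Ioo, ← abs_lt] at ht
    rw [(hasDerivAt_arcsinPQ (by linarith) ht).deriv]
    exact arcsinPQIntegrand_pos (by linarith) ht

end ArcsinPQ

section InverseOnInterval

variable {f g : ℝ → ℝ} {a b : ℝ}

lemma leftInvOn_Icc_neg_of_odd (hf : ∀ y, f (-y) = -f y) (hg : ∀ x, g (-x) = -g x)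
    (hinv : LeftInvOn g f (Icc 0 b)) : LeftInvOn g f (Icc (-b) b) := fun y hy => by
  rcases le_total 0 y with hy0 | hy0
  · exact hinv ⟨hy0, hy.2⟩
  · rw [← neg_neg y, hf, hg, hinv ⟨neg_nonneg.2 hy0, neg_le.1 hy.1⟩]

lemma mapsTo_and_rightInvOn_of_leftInvOn (hab : a ≤ b) (hf : ContinuousOn f (Icc a b))
    (hinv : LeftInvOn g f (Icc a b)) :
    MapsTo g (Icc (f a) (f b)) (Icc a b) ∧ RightInvOn g f (Icc (f a) (f b)) := by
  have hsurj : Icc (f a) (f b) ⊆ f '' Icc a b := intermediate_value_Icc hab hf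
  exact ⟨hinv.mapsTo hsurj, hinv.rightInvOn_image.mono hsurj⟩

lemma mem_Ioo_of_leftInvOn (hab : a ≤ b) (hf : ContinuousOn f (Icc a b))
    (hinv : LeftInvOn g f (Icc a b)) {x : ℝ} (hx : x ∈ Ioo (f a) (f b)) : g x ∈ Ioo a b := by
  obtain ⟨hmaps, hright⟩ := mapsTo_and_rightInvOn_of_leftInvOn hab hf hinv
  have hfg : f (g x) = x := hright (Ioo_subset_Icc_self hx)
  obtain ⟨hga, hgb⟩ := hmaps (Ioo_subset_Icc_self hx)
  refine ⟨hga.lt_of_ne ?_, hgb.lt_of_ne ?_⟩ <;> rintro h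
  · exact hx.1.ne (by rw [h, hfg])
  · exact hx.2.ne (by rw [← h, hfg])

lemma hasDerivAt_of_leftInvOn (hab : a ≤ b) (hf : ContinuousOn f (Icc a b))
    (hmono : StrictMonoOn f (Icc a b)) (hinv : LeftInvOn g f (Icc a b)) {x f' : ℝ}
    (hx : x ∈ Ioo (f a) (f b)) (hd : HasDerivAt f f' (g x)) (hf' : f' ≠ 0) :
    HasDerivAt g f'⁻¹ x := by
  obtain ⟨hmaps, hright⟩ := mapsTo_and_rightInvOn_of_leftInvOn hab hf hinv
  have hgmono : StrictMonoOn g (Icc (f a) (f b)) := fun u hu v hv huv => by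
    by_contra! h
    have := hmono.monotoneOn (hmaps hv) (hmaps hu) h
    rw [hright hu, hright hv] at this
    exact huv.not_ge this
  have himage : Icc a b ⊆ g '' Icc (f a) (f b) := fun y hy =>
    ⟨f y, ⟨hmono.monotoneOn (left_mem_Icc.2 hab) hy hy.1,
      hmono.monotoneOn hy (right_mem_Icc.2 hab) hy.2⟩, hinv hy⟩
  have hgx := mem_Ioo_of_leftInvOn hab hf hinv hx
  have hcont : ContinuousAt g x := hgmono.continuousAt_of_image_mem_nhds
    (Icc_mem_nhds hx.1 hx.2) (mem_of_superset (Icc_mem_nhds hgx.1 hgx.2) himage)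
  exact hd.of_local_left_inverse hcont hf'
    (eventually_of_mem (Icc_mem_nhds hx.1 hx.2) fun _ hy => hright hy)

end InverseOnInterval

lemma Function.Antiperiodic.deriv {f : ℝ → ℝ} {c : ℝ} (h : Antiperiodic f c) :
    Antiperiodic (deriv f) c := fun x => by
  simpa [deriv_comp_add_const] using congrFun (congrArg _root_.deriv h.funext) x

lemma deriv_half_eq_zero_of_symmetric {f : ℝ → ℝ} {c : ℝ} (h : ∀ x, f (c - x) = f x) :
    deriv f (c / 2) = 0 := by
  have := congrFun (congrArg deriv (funext h)) (c / 2)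
  rw [deriv_comp_const_sub, show c - c / 2 = c / 2 by ring] at this
  linarith

theorem stmt12_general (p q : ℝ) (hp : 1 < p) (hq : 1 < q) (sn : ℝ → ℝ) (π₀ : ℝ)
    (hπ : π₀ = 2 * ∫ t in (0:ℝ)..1, (1 - t ^ q) ^ (-(1 / p)))
    (hodd : ∀ x, sn (-x) = -sn x)
    (hsym : ∀ x, sn (π₀ - x) = sn x)
    (hinv : ∀ y ∈ Set.Icc (0:ℝ) 1,
      sn (∫ t in (0:ℝ)..y, (1 - t ^ q) ^ (-(1 / p))) = y) :
    ∀ x : ℝ, |sn x| ^ q + |deriv sn x| ^ p = 1 := by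
  have hcont := continuousOn_arcsinPQ hp hq.le
  have hmono := strictMonoOn_arcsinPQ hp hq.le
  have hend : arcsinPQ p q 1 = π₀ / 2 := by rw [arcsinPQ_eq_integral zero_le_one, hπ]; ring
  have hend' : arcsinPQ p q (-1) = -(π₀ / 2) := by rw [arcsinPQ_neg, hend]
  have hπ₀ : 0 < π₀ := by
    linarith [hmono ⟨le_rfl, by norm_num⟩ ⟨by norm_num, le_rfl⟩ (by norm_num)]
  have hleft : LeftInvOn sn (arcsinPQ p q) (Icc (-1) 1) :=
    leftInvOn_Icc_neg_of_odd arcsinPQ_neg hodd fun y hy => by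
      rw [arcsinPQ_eq_integral hy.1, hinv y hy]
  have hanti : Antiperiodic sn π₀ := fun x => by
    rw [add_comm, ← sub_neg_eq_add, hsym, hodd]
  have hperiodic : Periodic (fun x => |sn x| ^ q + |deriv sn x| ^ p) π₀ := fun x => by
    simp only [hanti x, hanti.deriv x, abs_neg]
  intro x
  rw [← hperiodic.sub_zsmul_eq (toIocDiv hπ₀ (-(π₀ / 2)) x), self_sub_toIocDiv_zsmul]
  obtain ⟨hlo, hhi⟩ := toIocMod_mem_Ioc hπ₀ (-(π₀ / 2)) x
  set t := toIocMod hπ₀ (-(π₀ / 2)) x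
  rcases hhi.eq_or_lt with ht | ht
  · have hsn : sn (π₀ / 2) = 1 := by rw [← hend]; exact hleft ⟨by norm_num, le_rfl⟩
    rw [show t = π₀ / 2 by linarith, hsn, deriv_half_eq_zero_of_symmetric hsym]
    simp [Real.zero_rpow (by linarith : p ≠ 0)]
  · have ht' : t ∈ Ioo (arcsinPQ p q (-1)) (arcsinPQ p q 1) := by
      rw [hend, hend']; exact ⟨hlo, by linarith⟩
    have hsn : |sn t| < 1 := abs_lt.2 (mem_Ioo_of_leftInvOn (by norm_num) hcont hleft ht')
    have hd := hasDerivAt_of_leftInvOn (by norm_num) hcont hmono hleft ht'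
      (hasDerivAt_arcsinPQ (by linarith) hsn) (arcsinPQIntegrand_pos (by linarith) hsn).ne'
    rw [hd.deriv]
    exact abs_rpow_add_abs_inv_arcsinPQIntegrand_rpow (by linarith) (by linarith) hsn.le

/-- generalized Pythagorean identity
|sin_{p,q}(x)|^q + |cos_{p,q}(x)|^p = 1 for all x ∈ ℝ, where cos_{p,q} = (sin_{p,q})'
and sin_{p,q} is the 2π_{p,q}-periodic odd function, even about π_{p,q}/2, inverting
y ↦ ∫₀^y (1-t^q)^{-1/p} dt on [0, π_{p,q}/2]. -/
theorem stmt12 (p q : ℝ) (hp : 1 < p) (hq : 1 < q) (sn : ℝ → ℝ) (π₀ : ℝ)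
    (hπ : π₀ = 2 * ∫ t in (0:ℝ)..1, (1 - t ^ q) ^ (-(1 / p)))
    (hodd : ∀ x, sn (-x) = -sn x)
    (hper : ∀ x, sn (x + 2 * π₀) = sn x)
    (hsym : ∀ x, sn (π₀ - x) = sn x)
    (hinv : ∀ y ∈ Set.Icc (0:ℝ) 1,
      sn (∫ t in (0:ℝ)..y, (1 - t ^ q) ^ (-(1 / p))) = y) :
    ∀ x : ℝ, |sn x| ^ q + |deriv sn x| ^ p = 1 :=
  stmt12_general p q hp hq sn π₀ hπ hodd hsym hinv
end

section
/- For 1 < p < ∞, ∫₀^{π_{2,p'}/2} (sin_{2,p'}(x))^{p'} dx = (1/p')·B(1/2, (p'+1)/p'), where B is the Beta function. -/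
/-- Euler Beta function B(a,b) = ∫₀¹ x^{a-1}(1-x)^{b-1} dx. -/
noncomputable def betaFn (a b : ℝ) : ℝ := ∫ x in (0:ℝ)..1, x ^ (a - 1) * (1 - x) ^ (b - 1)

/-!
With F(y) = ∫₀^y (1 - t^q)^{-1/2} dt the increasing primitive inverted by sin_{2,q}, the
substitution x = F(y) turns the integral into ∫₀¹ y^q (1 - y^q)^{-1/2} dy, and u = y^q turns
that into a Beta integral. Both substitutions are made on the open interval (0, 1), where the
maps are injective and differentiable, so that no integrability has to be checked for them.
-/

open Set MeasureTheory intervalIntegral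

theorem betaFn_comm (a b : ℝ) : betaFn a b = betaFn b a := by
  have h := integral_comp_sub_left (fun x : ℝ => x ^ (a - 1) * (1 - x) ^ (b - 1)) (a := 0) (b := 1) 1
  simp only [sub_zero, sub_self, sub_sub_cancel] at h
  rw [betaFn, betaFn, ← h]
  simp only [mul_comm]

theorem integral_rpow_mul_one_sub_rpow_rpow_eq_betaFn (a b : ℝ) {q : ℝ} (hq : 0 < q) :
    ∫ y in (0:ℝ)..1, y ^ a * (1 - y ^ q) ^ b = q⁻¹ * betaFn ((a + 1) / q) (b + 1) := by
  have hmono : StrictMonoOn (fun y : ℝ => y ^ q) (Icc 0 1) :=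
    (Real.strictMonoOn_rpow_Ici_of_exponent_pos hq).mono Icc_subset_Ici_self
  have himage : (fun y : ℝ => y ^ q) '' Ioo 0 1 = Ioo 0 1 := by
    simpa [Real.zero_rpow hq.ne'] using
      (Real.continuous_rpow_const hq.le).continuousOn.image_Ioo_of_strictMonoOn zero_le_one hmono
  have hderiv : ∀ y ∈ Ioo (0:ℝ) 1,
      HasDerivWithinAt (fun y : ℝ => y ^ q) (q * y ^ (q - 1)) (Ioo 0 1) y :=
    fun y hy => (Real.hasDerivAt_rpow_const (Or.inl hy.1.ne')).hasDerivWithinAt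
  have key := integral_image_eq_integral_abs_deriv_smul measurableSet_Ioo hderiv
    (hmono.injOn.mono Ioo_subset_Icc_self) fun u => u ^ ((a + 1) / q - 1) * (1 - u) ^ (b + 1 - 1)
  rw [himage] at key
  rw [betaFn, integral_of_le zero_le_one, integral_of_le zero_le_one, integral_Ioc_eq_integral_Ioo,
    integral_Ioc_eq_integral_Ioo, key, ← MeasureTheory.integral_const_mul]
  refine setIntegral_congr_fun measurableSet_Ioo fun y ⟨hy0, _⟩ => ?_
  have hexp : y ^ (q - 1) * (y ^ q) ^ ((a + 1) / q - 1) = y ^ a := by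
    rw [← Real.rpow_mul hy0.le, ← Real.rpow_add hy0]
    congr 1
    field_simp
    ring
  rw [smul_eq_mul, add_sub_cancel_right, abs_of_pos (by positivity), ← hexp]
  field_simp

theorem intervalIntegrable_one_sub_rpow_rpow {b q : ℝ} (hb : -1 < b) (hb0 : b ≤ 0) (hq : 1 ≤ q) :
    IntervalIntegrable (fun t : ℝ => (1 - t ^ q) ^ b) volume 0 1 := by
  have hdom : IntervalIntegrable (fun t : ℝ => (1 - t) ^ b) volume 0 1 := by
    simpa using ((intervalIntegrable_rpow' (a := 0) (b := 1) hb).comp_sub_left 1).symm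
  refine hdom.mono_fun' (by fun_prop : Measurable fun t : ℝ => (1 - t ^ q) ^ b).aestronglyMeasurable ?_
  rw [uIoc_of_le zero_le_one]
  refine (ae_restrict_iff' measurableSet_Ioc).2 (ae_of_all _ fun t ht => ?_)
  have htq : t ^ q ≤ t := Real.rpow_le_self_of_le_one ht.1.le ht.2 hq
  have hbase : 0 ≤ 1 - t ^ q := sub_nonneg.2 (Real.rpow_le_one ht.1.le ht.2 (by linarith))
  dsimp only
  rw [Real.norm_of_nonneg (Real.rpow_nonneg hbase b)]
  rcases ht.2.eq_or_lt with rfl | ht1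
  · simp
  · exact Real.rpow_le_rpow_of_nonpos (by linarith) (by linarith) hb0

theorem integral_comp_leftInverse_primitive {E : Type*} [NormedAddCommGroup E] [NormedSpace ℝ E]
    {w sn : ℝ → ℝ} {a b : ℝ} (φ : ℝ → E) (hab : a ≤ b)
    (hw : IntervalIntegrable w volume a b) (hwc : ContinuousOn w (Ioo a b))
    (hwpos : ∀ x ∈ Ioo a b, 0 < w x) (hinv : ∀ y ∈ Icc a b, sn (∫ t in a..y, w t) = y) :
    ∫ x in (0:ℝ)..∫ t in a..b, w t, φ (sn x) = ∫ y in a..b, w y • φ y := by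
  set F : ℝ → ℝ := fun y => ∫ t in a..y, w t
  have hFderiv : ∀ x ∈ Ioo a b, HasDerivAt F (w x) x := fun x hx =>
    integral_hasDerivAt_right
      (hw.mono_set (by rw [uIcc_of_le hab, uIcc_of_le hx.1.le]; exact Icc_subset_Icc_right hx.2.le))
      (hwc.stronglyMeasurableAtFilter isOpen_Ioo x hx) (hwc.continuousAt (Ioo_mem_nhds hx.1 hx.2))
  have hFcont : ContinuousOn F (Icc a b) := by
    simpa only [uIcc_of_le hab] using continuousOn_primitive_interval' hw left_mem_uIcc
  have hFmono : StrictMonoOn F (Icc a b) :=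
    strictMonoOn_of_deriv_pos (convex_Icc a b) hFcont fun x hx => by
      rw [interior_Icc] at hx
      exact (hFderiv x hx).deriv ▸ hwpos x hx
  have hFa : F a = 0 := integral_same
  have himage : F '' Ioo a b = Ioo 0 (F b) := by
    rw [hFcont.image_Ioo_of_strictMonoOn hab hFmono, hFa]
  have key := integral_image_eq_integral_abs_deriv_smul measurableSet_Ioo
    (fun x hx => (hFderiv x hx).hasDerivWithinAt) (hFmono.injOn.mono Ioo_subset_Icc_self)
    fun x => φ (sn x)
  have hFb : 0 ≤ F b := hFa ▸ hFmono.monotoneOn (left_mem_Icc.2 hab) (right_mem_Icc.2 hab) hab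
  rw [himage] at key
  rw [integral_of_le hFb, integral_of_le hab, integral_Ioc_eq_integral_Ioo,
    integral_Ioc_eq_integral_Ioo, key]
  refine setIntegral_congr_fun measurableSet_Ioo fun y hy => ?_
  rw [abs_of_pos (hwpos y hy), hinv y (Ioo_subset_Icc_self hy)]

/-- ∫₀^{π_{2,p'}/2} (sin_{2,p'} x)^{p'} dx = (1/p')·B(1/2, (p'+1)/p'). -/
theorem stmt14 (p : ℝ) (hp : 1 < p) (sn : ℝ → ℝ) (π₀ : ℝ)
    (hπ : π₀ = 2 * ∫ t in (0:ℝ)..1, (1 - t ^ (p / (p - 1))) ^ (-(1/2 : ℝ)))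
    (hinv : ∀ y ∈ Set.Icc (0:ℝ) 1,
      sn (∫ t in (0:ℝ)..y, (1 - t ^ (p / (p - 1))) ^ (-(1/2 : ℝ))) = y) :
    ∫ x in (0:ℝ)..(π₀ / 2), sn x ^ (p / (p - 1)) =
      (1 / (p / (p - 1))) * betaFn (1/2) ((p / (p - 1) + 1) / (p / (p - 1))) := by
  set q := p / (p - 1)
  have hq : 1 < q := (one_lt_div (by linarith)).2 (by linarith)
  have hbase : ∀ t ∈ Ioo (0:ℝ) 1, 0 < 1 - t ^ q := fun t ht =>
    sub_pos.2 (Real.rpow_lt_one ht.1.le ht.2 (by linarith))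
  have hwc : ContinuousOn (fun t : ℝ => (1 - t ^ q) ^ (-(1/2 : ℝ))) (Ioo 0 1) := fun t ht =>
    ((continuousAt_const.sub (Real.continuousAt_rpow_const t q (Or.inl ht.1.ne'))).rpow_const
      (Or.inl (hbase t ht).ne')).continuousWithinAt
  have hπ' : π₀ / 2 = ∫ t in (0:ℝ)..1, (1 - t ^ q) ^ (-(1/2 : ℝ)) := by rw [hπ]; ring
  rw [hπ', integral_comp_leftInverse_primitive (· ^ q) zero_le_one
      (intervalIntegrable_one_sub_rpow_rpow (by norm_num) (by norm_num) hq.le) hwc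
      (fun t ht => Real.rpow_pos_of_pos (hbase t ht) _) hinv]
  simp only [smul_eq_mul, fun y : ℝ => mul_comm ((1 - y ^ q) ^ (-(1/2 : ℝ))) (y ^ q)]
  rw [integral_rpow_mul_one_sub_rpow_rpow_eq_betaFn _ _ (by linarith), betaFn_comm, one_div]
  norm_num
end

section
/- Periodic extension generates higher eigenfunctions: let 1 < p, q < ∞, let (f₁, λ₁) solve (⌊f''⌉^{p-1})'' = λ⌊f⌉^{q-1} on [0,1] with Navier boundary conditions, f₁ > 0 on (0,1), ‖f₁''‖_{L^p(0,1)} = 1, and let f₁* be the 2-periodic odd extension of f₁ to ℝ. Then for each n ≥ 1, the pair (fₙ(t) = f₁*(nt)/n², λₙ = n^{2q}·λ₁) solves the same equation on [0,1] with Navier boundary conditions and ‖fₙ''‖_{L^p(0,1)} = 1, and fₙ has exactly n-1 zeros in (0,1). -/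
open Set Filter Topology Function MeasureTheory

section Gluing

variable {f₁ f₂ : ℝ → ℝ} {a : ℝ}

theorem hasDerivAt_if_le (hf₁ : Differentiable ℝ f₁) (hf₂ : Differentiable ℝ f₂)
    (h₀ : f₁ a = f₂ a) (h₁ : deriv f₁ a = deriv f₂ a) (x : ℝ) :
    HasDerivAt (fun x => if x ≤ a then f₁ x else f₂ x)
      (if x ≤ a then deriv f₁ x else deriv f₂ x) x := by
  rcases lt_trichotomy x a with hx | rfl | hx
  · rw [if_pos hx.le]
    refine (hf₁ x).hasDerivAt.congr_of_eventuallyEq ?_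
    filter_upwards [Iio_mem_nhds hx] with y hy using if_pos hy.le
  · rw [if_pos le_rfl]
    have hl : HasDerivWithinAt (fun y => if y ≤ x then f₁ y else f₂ y) (deriv f₁ x) (Iic x) x :=
      (hf₁ x).hasDerivAt.hasDerivWithinAt.congr (fun y hy => if_pos hy) (if_pos le_rfl)
    have hr : HasDerivWithinAt (fun y => if y ≤ x then f₁ y else f₂ y) (deriv f₁ x) (Ici x) x := by
      refine h₁ ▸ (hf₂ x).hasDerivAt.hasDerivWithinAt.congr (fun y hy => ?_) (by simp [h₀])
      split_ifs with h
      · rw [le_antisymm h hy, h₀]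
      · rfl
    simpa using hl.union hr
  · rw [if_neg hx.not_ge]
    refine (hf₂ x).hasDerivAt.congr_of_eventuallyEq ?_
    filter_upwards [Ioi_mem_nhds hx] with y hy using if_neg hy.not_ge

theorem contDiff_if_le {n : ℕ} (hf₁ : ContDiff ℝ n f₁) (hf₂ : ContDiff ℝ n f₂)
    (h : ∀ k ≤ n, iteratedDeriv k f₁ a = iteratedDeriv k f₂ a) :
    ContDiff ℝ n (fun x => if x ≤ a then f₁ x else f₂ x) := by
  induction n generalizing f₁ f₂ with
  | zero =>
    simp only [CharP.cast_eq_zero, contDiff_zero] at hf₁ hf₂ ⊢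
    exact hf₁.if_le hf₂ continuous_id continuous_const fun x hx => by
      simpa [hx] using h 0 le_rfl
  | succ n ih =>
    have hd₁ : Differentiable ℝ f₁ := hf₁.differentiable (by simp)
    have hd₂ : Differentiable ℝ f₂ := hf₂.differentiable (by simp)
    have hderiv := hasDerivAt_if_le hd₁ hd₂ (by simpa using h 0 (by omega))
      (by simpa using h 1 (by omega))
    rw [Nat.cast_succ, contDiff_succ_iff_deriv] at hf₁ hf₂ ⊢
    refine ⟨fun x => (hderiv x).differentiableAt, by simp, ?_⟩
    rw [funext fun x => (hderiv x).deriv]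
    exact ih hf₁.2.2 hf₂.2.2 fun k hk => by
      simpa only [iteratedDeriv_succ'] using h (k + 1) (by omega)

end Gluing

theorem iteratedDeriv_neg_comp_two_mul_sub {F : ℝ → ℝ} {a : ℝ} {k : ℕ}
    (hk : Even k → iteratedDeriv k F a = 0) :
    iteratedDeriv k (fun x => -F (2 * a - x)) a = iteratedDeriv k F a := by
  simp only [iteratedDeriv_fun_neg, iteratedDeriv_comp_const_sub, two_mul, add_sub_cancel_right]
  rcases k.even_or_odd with hk' | hk'
  · simp [hk hk']
  · simp [hk'.neg_one_pow]

theorem Function.Odd.even_deriv {f : ℝ → ℝ} (hf : f.Odd) : (deriv f).Even := fun x => by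
  have h := deriv_comp_neg f (-x)
  rw [funext hf, deriv.fun_neg, neg_neg] at h
  linarith

theorem Function.Even.odd_deriv {f : ℝ → ℝ} (hf : f.Even) : (deriv f).Odd := fun x => by
  have h := deriv_comp_neg f x
  rw [funext hf] at h
  linarith

theorem Function.Periodic.deriv {f : ℝ → ℝ} {c : ℝ} (hf : Periodic f c) : Periodic (deriv f) c :=
  fun x => by rw [← deriv_comp_add_const, hf.funext]

theorem exists_eq_two_mul_intCast_add_or_sub (t : ℝ) :
    ∃ k : ℤ, ∃ s ∈ Icc (0:ℝ) 1, t = 2 * k + s ∨ t = 2 * k - s := by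
  rcases Int.even_or_odd ⌊t⌋ with ⟨k, hk⟩ | ⟨k, hk⟩
  · refine ⟨k, t - ⌊t⌋, ⟨by linarith [Int.floor_le t], by linarith [Int.lt_floor_add_one t]⟩,
      Or.inl ?_⟩
    rw [hk]; push_cast; ring
  · refine ⟨k + 1, ⌊t⌋ + 1 - t, ⟨by linarith [Int.lt_floor_add_one t], by linarith [Int.floor_le t]⟩,
      Or.inr ?_⟩
    rw [hk]; push_cast; ring

theorem Function.Odd.apply_intCast_add_of_periodic {G : ℝ → ℝ} (hodd : G.Odd)
    (hper : Periodic G 2) (m : ℤ) (s : ℝ) : G (m + s) = -G (m - s) := by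
  rw [← hper.sub_int_mul_eq m, ← hodd]
  ring_nf

theorem Function.Odd.apply_intCast_of_periodic {G : ℝ → ℝ} (hodd : G.Odd) (hper : Periodic G 2)
    (m : ℤ) : G m = 0 := by
  have h := hodd.apply_intCast_add_of_periodic hper m 0
  simp only [add_zero, sub_zero] at h
  linarith

theorem Function.Periodic.apply_two_mul_intCast_add {G : ℝ → ℝ} (hper : Periodic G 2) (k : ℤ)
    (s : ℝ) : G (2 * k + s) = G s := by
  rw [add_comm, mul_comm, hper.int_mul k]

theorem Function.Odd.apply_two_mul_intCast_sub_of_periodic {G : ℝ → ℝ} (hodd : G.Odd)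
    (hper : Periodic G 2) (k : ℤ) (s : ℝ) : G (2 * k - s) = -G s := by
  rw [sub_eq_neg_add, mul_comm, hper.int_mul k, hodd]

theorem eq_of_odd_of_periodic_of_eqOn {G₁ G₂ : ℝ → ℝ} (hodd₁ : G₁.Odd) (hper₁ : Periodic G₁ 2)
    (hodd₂ : G₂.Odd) (hper₂ : Periodic G₂ 2) (h : EqOn G₁ G₂ (Icc 0 1)) : G₁ = G₂ := by
  funext t
  obtain ⟨k, s, hs, rfl | rfl⟩ := exists_eq_two_mul_intCast_add_or_sub t
  · rw [hper₁.apply_two_mul_intCast_add, hper₂.apply_two_mul_intCast_add, h hs]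
  · rw [hodd₁.apply_two_mul_intCast_sub_of_periodic hper₁,
      hodd₂.apply_two_mul_intCast_sub_of_periodic hper₂, h hs]

section OddPeriodicExtension

variable {G F : ℝ → ℝ}

theorem Function.Odd.apply_eq_zero_iff_of_periodic (hodd : G.Odd) (hper : Periodic G 2)
    (hext : EqOn G F (Icc 0 1)) (hpos : ∀ t ∈ Ioo 0 1, 0 < F t) (u : ℝ) :
    G u = 0 ↔ ∃ m : ℤ, u = m := by
  refine ⟨fun hu => ?_, fun ⟨m, hm⟩ => hm ▸ hodd.apply_intCast_of_periodic hper m⟩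
  obtain ⟨k, s, hs, hks⟩ := exists_eq_two_mul_intCast_add_or_sub u
  have hGu : G u = F s ∨ G u = -F s := by
    rcases hks with rfl | rfl
    · exact .inl (by rw [hper.apply_two_mul_intCast_add, hext hs])
    · exact .inr (by rw [hodd.apply_two_mul_intCast_sub_of_periodic hper, hext hs])
  have hs' : s = 0 ∨ s = 1 := by
    by_contra! h
    have := hpos s ⟨lt_of_le_of_ne hs.1 (Ne.symm h.1), lt_of_le_of_ne hs.2 h.2⟩
    rcases hGu with h | h <;> linarith
  rcases hs' with rfl | rfl <;> rcases hks with rfl | rfl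
  · exact ⟨2 * k, by push_cast; ring⟩
  · exact ⟨2 * k, by push_cast; ring⟩
  · exact ⟨2 * k + 1, by push_cast; ring⟩
  · exact ⟨2 * k - 1, by push_cast; ring⟩

theorem Function.Odd.contDiff_of_periodic (hodd : G.Odd) (hper : Periodic G 2)
    (hext : EqOn G F (Icc 0 1)) {n : ℕ} (hF : ContDiff ℝ n F)
    (h₀ : ∀ k ≤ n, Even k → iteratedDeriv k F 0 = 0)
    (h₁ : ∀ k ≤ n, Even k → iteratedDeriv k F 1 = 0) : ContDiff ℝ n G := by
  have hreflect : ∀ a : ℝ, ContDiff ℝ n (fun x => -F (2 * a - x)) := fun a =>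
    (hF.comp (contDiff_const.sub contDiff_id)).neg
  -- near `[0,1)`, `G` is the odd reflection of `F` across `0`; near `1`, across `1`
  have hlocal : ∀ s ∈ Icc (0:ℝ) 1, ContDiffAt ℝ n G s := by
    intro s hs
    rcases hs.2.lt_or_eq with hs1 | rfl
    · refine (contDiff_if_le (hreflect 0) hF fun k hk =>
        iteratedDeriv_neg_comp_two_mul_sub (h₀ k hk)).contDiffAt.congr_of_eventuallyEq ?_
      filter_upwards [Ioo_mem_nhds (by linarith [hs.1] : (-1:ℝ) < s) hs1] with x hx
      split_ifs with h
      · rw [← neg_neg x, hodd, neg_neg, hext ⟨by linarith, by linarith [hx.1]⟩]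
        ring_nf
      · exact hext ⟨by linarith, hx.2.le⟩
    · refine (contDiff_if_le hF (hreflect 1) fun k hk =>
        (iteratedDeriv_neg_comp_two_mul_sub (h₁ k hk)).symm).contDiffAt.congr_of_eventuallyEq ?_
      filter_upwards [Ioo_mem_nhds zero_lt_one one_lt_two] with x hx
      split_ifs with h
      · exact hext ⟨hx.1.le, h⟩
      · rw [mul_one, ← hext ⟨by linarith [hx.2], by linarith⟩, hper.sub_eq', hodd, neg_neg]
  refine contDiff_iff_contDiffAt.2 fun t => ?_
  obtain ⟨k, s, hs, rfl | rfl⟩ := exists_eq_two_mul_intCast_add_or_sub t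
  · have e : G = fun x => G (x - 2 * k) := funext fun x => by
      simpa using hper.apply_two_mul_intCast_add k (x - 2 * k)
    rw [e]
    exact ContDiffAt.comp (g := G) _ (by simpa using hlocal s hs)
      (contDiffAt_id.sub contDiffAt_const)
  · have e : G = fun x => -G (2 * k - x) := funext fun x => by
      rw [hodd.apply_two_mul_intCast_sub_of_periodic hper, neg_neg]
    rw [e]
    exact (ContDiffAt.comp (g := G) _ (by simpa using hlocal s hs)
      (contDiffAt_const.sub contDiffAt_id)).neg

theorem Function.Odd.eqOn_deriv_deriv_of_periodic (hodd : G.Odd) (hper : Periodic G 2)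
    (hext : EqOn G F (Icc 0 1)) (h₀ : deriv (deriv F) 0 = 0) (h₁ : deriv (deriv F) 1 = 0) :
    EqOn (deriv (deriv G)) (deriv (deriv F)) (Icc 0 1) := by
  have hG'' := hodd.even_deriv.odd_deriv.apply_intCast_of_periodic hper.deriv.deriv
  intro s hs
  rcases hs.1.eq_or_lt with rfl | hs0
  · simpa [h₀] using hG'' 0
  rcases hs.2.eq_or_lt with rfl | hs1
  · simpa [h₁] using hG'' 1
  have hGF : G =ᶠ[𝓝 s] F := by
    filter_upwards [Ioo_mem_nhds hs0 hs1] with x hx using hext (Ioo_subset_Icc_self hx)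
  exact hGF.deriv.deriv_eq

end OddPeriodicExtension

theorem spow_zero (r : ℝ) : spow r 0 = 0 := by
  simp [spow]

theorem spow_neg (r x : ℝ) : spow r (-x) = -spow r x := by
  simp [spow, Real.sign_neg]

theorem spow_div_of_pos (r x : ℝ) {c : ℝ} (hc : 0 < c) : spow r (x / c) = spow r x / c ^ r := by
  have hsign : Real.sign (x / c) = Real.sign x := by
    rcases lt_trichotomy x 0 with h | rfl | h
    · rw [Real.sign_of_neg h, Real.sign_of_neg (div_neg_of_neg_of_pos h hc)]
    · simp
    · rw [Real.sign_of_pos h, Real.sign_of_pos (div_pos h hc)]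
  rw [spow, spow, hsign, abs_div, abs_of_pos hc, Real.div_rpow (abs_nonneg x) hc.le]
  ring

theorem deriv_deriv_comp_const_mul (f : ℝ → ℝ) (c x : ℝ) :
    deriv (deriv fun t => f (c * t)) x = c ^ 2 * deriv (deriv f) (c * x) := by
  have h : ∀ g : ℝ → ℝ, deriv (fun t => g (c * t)) = fun t => c * deriv g (c * t) :=
    fun g => funext fun t => deriv_comp_mul_left c g t
  rw [h, deriv_const_mul_field', h]
  ring

theorem deriv_deriv_comp_const_mul_div_sq (f : ℝ → ℝ) {c : ℝ} (hc : c ≠ 0) (x : ℝ) :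
    deriv (deriv fun t => f (c * t) / c ^ 2) x = deriv (deriv f) (c * x) := by
  have h : ∀ g : ℝ → ℝ, deriv (fun t => g t / c ^ 2) = fun t => deriv g t / c ^ 2 :=
    fun g => funext fun t => deriv_div_const _
  simp only [h, deriv_deriv_comp_const_mul]
  field_simp

theorem integral_comp_natCast_mul_of_symm {φ : ℝ → ℝ} (hφ : Continuous φ)
    (hsym : ∀ (m : ℕ) (s : ℝ), φ (m + s) = φ (m - s)) {n : ℕ} (hn : n ≠ 0) :
    ∫ t in (0:ℝ)..1, φ (n * t) = ∫ t in (0:ℝ)..1, φ t := by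
  have hunit : ∀ m : ℕ, ∫ x in (m:ℝ)..m + 1, φ x = ∫ x in (0:ℝ)..1, φ x := by
    intro m
    induction m with
    | zero => simp
    | succ m ih =>
      have hreflect : ∫ x in ((m + 1 : ℕ) : ℝ)..(m + 1 : ℕ) + 1, φ x =
          ∫ x in ((m + 1 : ℕ) : ℝ)..(m + 1 : ℕ) + 1, φ (2 * (m + 1 : ℕ) - x) :=
        intervalIntegral.integral_congr fun x _ => by
          convert hsym (m + 1) (x - (m + 1 : ℕ)) using 2 <;> push_cast <;> ring
      rw [hreflect, intervalIntegral.integral_comp_sub_left, ← ih]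
      push_cast
      congr 1 <;> ring
  have hsum := intervalIntegral.sum_integral_adjacent_intervals (a := Nat.cast) (n := n)
    fun k _ => hφ.intervalIntegrable (μ := volume) _ _
  simp only [Nat.cast_succ, hunit, Finset.sum_const, Finset.card_range, nsmul_eq_mul,
    Nat.cast_zero] at hsum
  rw [intervalIntegral.integral_comp_mul_left _ (Nat.cast_ne_zero.2 hn), mul_zero, mul_one, ← hsum,
    smul_eq_mul, inv_mul_cancel_left₀ (Nat.cast_ne_zero.2 hn)]

theorem Function.Odd.integral_abs_deriv_deriv_comp_mul_div_sq_rpow {G : ℝ → ℝ} (hodd : G.Odd)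
    (hper : Periodic G 2) (hG : ContDiff ℝ 2 G) {p : ℝ} (hp : 0 ≤ p) {n : ℕ} (hn : n ≠ 0) :
    ∫ t in (0:ℝ)..1, |deriv (deriv fun s => G (n * s) / (n : ℝ) ^ 2) t| ^ p =
      ∫ t in (0:ℝ)..1, |deriv (deriv G) t| ^ p := by
  have hG''odd := hodd.even_deriv.odd_deriv
  have hsym (m : ℕ) (s : ℝ) : |deriv (deriv G) (m + s)| ^ p = |deriv (deriv G) (m - s)| ^ p := by
    simpa [abs_neg] using congrArg (|·| ^ p)
      (hG''odd.apply_intCast_add_of_periodic hper.deriv.deriv m s)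
  have hG'' : Continuous (deriv (deriv G)) := by
    simpa [iteratedDeriv_succ] using hG.continuous_iteratedDeriv 2 le_rfl
  simp only [deriv_deriv_comp_const_mul_div_sq G (Nat.cast_ne_zero.2 hn)]
  exact integral_comp_natCast_mul_of_symm (hG''.abs.rpow_const fun _ => .inr hp) hsym hn

theorem encard_setOf_mem_Ioo_natCast_mul_eq_intCast {n : ℕ} (hn : n ≠ 0) :
    {t : ℝ | t ∈ Ioo 0 1 ∧ ∃ m : ℤ, n * t = m}.encard = (n - 1 : ℕ) := by
  have hn' : (0:ℝ) < n := by positivity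
  have hset : {t : ℝ | t ∈ Ioo 0 1 ∧ ∃ m : ℤ, n * t = m} = (fun j : ℕ => (j:ℝ) / n) '' Ioo 0 n := by
    ext t
    simp only [mem_ofPred_eq, mem_image, mem_Ioo]
    constructor
    · rintro ⟨⟨h0, h1⟩, m, hm⟩
      have hm0 : 0 < m := by exact_mod_cast (hm ▸ mul_pos hn' h0 : (0:ℝ) < m)
      have hmn : m < n := by
        have : (m:ℝ) < n := hm ▸ (by nlinarith)
        exact_mod_cast this
      refine ⟨m.toNat, ⟨by omega, by omega⟩, ?_⟩
      rw [show ((m.toNat : ℕ) : ℝ) = m by exact_mod_cast Int.toNat_of_nonneg hm0.le, ← hm]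
      field_simp
    · rintro ⟨j, ⟨hj0, hjn⟩, rfl⟩
      refine ⟨⟨by positivity, (div_lt_one hn').2 (by exact_mod_cast hjn)⟩, j, ?_⟩
      push_cast
      field_simp
  have hinj : Injective fun j : ℕ => (j : ℝ) / n :=
    fun a b h => by simpa [hn'.ne'] using h
  rw [hset, hinj.encard_image,
    ← Finset.coe_Ioo, Set.encard_coe_eq_coe_finsetCard, Nat.card_Ioo]
  simp

def SolvesEigenEq (p q lam : ℝ) (u : ℝ → ℝ) : Prop :=
  ContDiff ℝ 2 u ∧ ContDiff ℝ 2 (fun t => spow (p - 1) (deriv (deriv u) t)) ∧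
  ∀ t, deriv (deriv fun s => spow (p - 1) (deriv (deriv u) s)) t = lam * spow (q - 1) (u t)

theorem SolvesEigenEq.comp_const_mul_div_sq {p q lam : ℝ} {u : ℝ → ℝ}
    (h : SolvesEigenEq p q lam u) {c : ℝ} (hc : 0 < c) :
    SolvesEigenEq p q (c ^ (2 * q) * lam) (fun t => u (c * t) / c ^ 2) := by
  obtain ⟨hu, hV, hode⟩ := h
  have hlin : ContDiff ℝ 2 (c * ·) := contDiff_const.mul contDiff_id
  have hu'' : deriv (deriv fun t => u (c * t) / c ^ 2) = fun t => deriv (deriv u) (c * t) :=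
    funext (deriv_deriv_comp_const_mul_div_sq u hc.ne')
  have hpow : c ^ (2 * q) = (c ^ 2) ^ (q - 1) * c ^ 2 := by
    rw [← Real.rpow_natCast, ← Real.rpow_mul hc.le, ← Real.rpow_add hc]
    congr 1
    push_cast
    ring
  refine ⟨(hu.comp hlin).div_const _, hu'' ▸ hV.comp hlin, fun t => ?_⟩
  rw [hu'', spow_div_of_pos _ _ (by positivity), hpow,
    deriv_deriv_comp_const_mul (fun s => spow (p - 1) (deriv (deriv u) s)), hode]
  field_simp

theorem iteratedDeriv_eq_zero_of_even_of_le_two {f : ℝ → ℝ} {a : ℝ} (h₀ : f a = 0)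
    (h₂ : deriv (deriv f) a = 0) : ∀ k ≤ 2, Even k → iteratedDeriv k f a = 0 := by
  intro k hk hke
  interval_cases k
  · simpa using h₀
  · exact absurd hke Nat.not_even_one
  · simpa [iteratedDeriv_succ] using h₂

theorem NavierSol.solvesEigenEq_of_odd_periodic {p q lam : ℝ} {F G : ℝ → ℝ}
    (h : NavierSol p q lam 1 F) (hodd : G.Odd) (hper : Periodic G 2)
    (hext : EqOn G F (Icc 0 1)) : SolvesEigenEq p q lam G := by
  obtain ⟨hF, hK, hode, hF₀, hF₁, hF₀'', hF₁''⟩ := h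
  set K := fun t => spow (p - 1) (deriv (deriv F) t)
  set H := fun t => spow (p - 1) (deriv (deriv G) t)
  have hG'' := hodd.eqOn_deriv_deriv_of_periodic hper hext hF₀'' hF₁''
  have hHodd : H.Odd := fun t => by simp only [H, hodd.even_deriv.odd_deriv t, spow_neg]
  have hHper : Periodic H 2 := hper.deriv.deriv.comp (spow (p - 1))
  have hHK : EqOn H K (Icc 0 1) := fun t ht => by simp only [H, K, hG'' ht]
  have hK'' : ∀ a ∈ Icc (0:ℝ) 1, F a = 0 → deriv (deriv K) a = 0 := fun a ha hFa => by
    simpa [hFa, spow_zero] using hode a ha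
  have hK''₀ := hK'' 0 (left_mem_Icc.2 zero_le_one) hF₀
  have hK''₁ := hK'' 1 (right_mem_Icc.2 zero_le_one) hF₁
  have hKH := hHodd.eqOn_deriv_deriv_of_periodic hHper hHK hK''₀ hK''₁
  refine ⟨hodd.contDiff_of_periodic hper hext (n := 2) hF
      (iteratedDeriv_eq_zero_of_even_of_le_two hF₀ hF₀'')
      (iteratedDeriv_eq_zero_of_even_of_le_two hF₁ hF₁''),
    hHodd.contDiff_of_periodic hHper hHK (n := 2) hK
      (iteratedDeriv_eq_zero_of_even_of_le_two (by simp [K, hF₀'', spow_zero]) hK''₀)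
      (iteratedDeriv_eq_zero_of_even_of_le_two (by simp [K, hF₁'', spow_zero]) hK''₁),
    congrFun (eq_of_odd_of_periodic_of_eqOn hHodd.even_deriv.odd_deriv hHper.deriv.deriv
      (fun t => by simp only [hodd t, spow_neg, mul_neg]) (fun t => by simp only [hper t])
      fun t ht => by rw [hKH ht, hode t ht, hext ht])⟩

theorem stmt17_general (p q lam1 : ℝ) (hp : 1 < p)
    (f1 : ℝ → ℝ) (hf1 : NavierSol p q lam1 1 f1)
    (hpos : ∀ t ∈ Set.Ioo (0:ℝ) 1, 0 < f1 t)
    (hnorm1 : (∫ t in (0:ℝ)..1, |deriv (deriv f1) t| ^ p) ^ (1 / p) = 1)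
    (g : ℝ → ℝ) (hgodd : ∀ t, g (-t) = -g t) (hgper : ∀ t, g (t + 2) = g t)
    (hgext : ∀ t ∈ Set.Icc (0:ℝ) 1, g t = f1 t)
    (n : ℕ) (hn : 1 ≤ n)
    (fn : ℝ → ℝ) (hfn : ∀ t, fn t = g (n * t) / (n : ℝ) ^ 2) :
    NavierSol p q ((n : ℝ) ^ (2 * q) * lam1) 1 fn ∧
      (∫ t in (0:ℝ)..1, |deriv (deriv fn) t| ^ p) ^ (1 / p) = 1 ∧
      {t | t ∈ Set.Ioo (0:ℝ) 1 ∧ fn t = 0}.encard = (n - 1 : ℕ) := by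
  obtain rfl : fn = fun t => g (n * t) / (n : ℝ) ^ 2 := funext hfn
  have hn0 : n ≠ 0 := by omega
  have hodd : g.Odd := hgodd
  have hper : Periodic g 2 := hgper
  have hg := hf1.solvesEigenEq_of_odd_periodic hodd hper hgext
  obtain ⟨-, -, -, -, -, hf1₀'', hf1₁''⟩ := hf1
  have hg'' := hodd.eqOn_deriv_deriv_of_periodic hper hgext hf1₀'' hf1₁''
  have hg''odd := hodd.even_deriv.odd_deriv
  have hfn'' := deriv_deriv_comp_const_mul_div_sq g (Nat.cast_ne_zero.2 hn0)
  obtain ⟨hC, hCK, hode⟩ := hg.comp_const_mul_div_sq (Nat.cast_pos.2 (Nat.pos_of_ne_zero hn0))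
  refine ⟨⟨hC, hCK, fun t _ => hode t, ?_, ?_, ?_, ?_⟩, ?_, ?_⟩
  · simp [hodd.map_zero]
  · simp [(by exact_mod_cast hodd.apply_intCast_of_periodic hper n : g n = 0)]
  · simp [hfn'', hg''odd.map_zero]
  · simpa [hfn''] using hg''odd.apply_intCast_of_periodic hper.deriv.deriv n
  · have hint : ∫ t in (0:ℝ)..1, |deriv (deriv g) t| ^ p =
        ∫ t in (0:ℝ)..1, |deriv (deriv f1) t| ^ p :=
      intervalIntegral.integral_congr fun t ht => by rw [hg'' (by simpa using ht)]
    rwa [hodd.integral_abs_deriv_deriv_comp_mul_div_sq_rpow hper hg.1 (by linarith) hn0, hint]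
  · simp only [div_eq_zero_iff, pow_eq_zero_iff two_ne_zero, Nat.cast_eq_zero, hn0, or_false,
      hodd.apply_eq_zero_iff_of_periodic hper hgext hpos]
    exact encard_setOf_mem_Ioo_natCast_mul_eq_intCast hn0

/-- the 2-periodic odd extension of the first (positive, normalized)
eigenfunction generates, by fₙ(t) = f₁*(nt)/n², the n-th spectral couple on [0,1]
with λₙ = n^{2q}λ₁ and exactly n-1 interior zeros. -/
theorem stmt17 (p q lam1 : ℝ) (hp : 1 < p) (hq : 1 < q) (hlam : 0 < lam1)
    (f1 : ℝ → ℝ) (hf1 : NavierSol p q lam1 1 f1)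
    (hpos : ∀ t ∈ Set.Ioo (0:ℝ) 1, 0 < f1 t)
    (hnorm1 : (∫ t in (0:ℝ)..1, |deriv (deriv f1) t| ^ p) ^ (1 / p) = 1)
    (g : ℝ → ℝ) (hgodd : ∀ t, g (-t) = -g t) (hgper : ∀ t, g (t + 2) = g t)
    (hgext : ∀ t ∈ Set.Icc (0:ℝ) 1, g t = f1 t)
    (n : ℕ) (hn : 1 ≤ n)
    (fn : ℝ → ℝ) (hfn : ∀ t, fn t = g (n * t) / (n : ℝ) ^ 2) :
    NavierSol p q ((n : ℝ) ^ (2 * q) * lam1) 1 fn ∧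
      (∫ t in (0:ℝ)..1, |deriv (deriv fn) t| ^ p) ^ (1 / p) = 1 ∧
      {t | t ∈ Set.Ioo (0:ℝ) 1 ∧ fn t = 0}.encard = (n - 1 : ℕ) :=
  stmt17_general p q lam1 hp f1 hf1 hpos hnorm1 g hgodd hgper hgext n hn fn hfn
end
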